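/- arXiv:2012.02982 — 6 statements merged into one kernel-verified Lean document; each statement's English description precedes it below -/
import Mathlib

section
/- For any integer n ≥ 2, any v, v* ∈ ℝ³ and any θ ∈ (0,π], the φ-average Θ_n(v,v*,θ) := (1/(2π)) ∫₀^{2π} |v'|^{2n} dφ equals ((1+cos θ)/2)^n |v|^{2n} + ((1−cos θ)/2)^n |v*|^{2n} + Λ_n(v,v*,θ), where, setting A_n = {(i,j,k) ∈ ℕ³ : i+j+k = n, i ≤ n−1, j ≤ n−1, k even}, Λ_n(v,v*,θ) = ∑_{(i,j,k) ∈ A_n} (n!/(i! j! ((k/2)!)²)) ((1+cos θ)/2)^i ((1−cos θ)/2)^j ((sin θ)/2)^k |v|^{2i} |v*|^{2j} (|v|²|v*|² − (v·v*)²)^{k/2}. -/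
open MeasureTheory Real Set

noncomputable section

abbrev V3 : Type := EuclideanSpace ℝ (Fin 3)

/-- Moment of order `p` of a measure on `ℝ³`. -/
def mom (p : ℝ) (f : Measure V3) : ℝ := ∫ v, ‖v‖ ^ p ∂f

/-- Moment of order `p`, valued in `[0,∞]`. -/
def momL (p : ℝ) (f : Measure V3) : ENNReal := ∫⁻ v, (‖v‖₊ : ENNReal) ^ p ∂f

/-- `(X/|X|, I X/|X|, J X/|X|)` is an orthonormal basis of `ℝ³` for every `X ≠ 0`,
and `I 0 = J 0 = 0`. -/
structure IsFrame (Ifun Jfun : V3 → V3) : Prop where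
  I_zero : Ifun 0 = 0
  J_zero : Jfun 0 = 0
  norm_I : ∀ X : V3, X ≠ 0 → ‖Ifun X‖ = ‖X‖
  norm_J : ∀ X : V3, X ≠ 0 → ‖Jfun X‖ = ‖X‖
  inner_X_I : ∀ X : V3, X ≠ 0 → (inner ℝ X (Ifun X) : ℝ) = 0
  inner_X_J : ∀ X : V3, X ≠ 0 → (inner ℝ X (Jfun X) : ℝ) = 0
  inner_I_J : ∀ X : V3, X ≠ 0 → (inner ℝ (Ifun X) (Jfun X) : ℝ) = 0

/-- `Γ(X,φ) = (cos φ) I(X) + (sin φ) J(X)`. -/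
def Gam (Ifun Jfun : V3 → V3) (X : V3) (φ : ℝ) : V3 :=
  Real.cos φ • Ifun X + Real.sin φ • Jfun X

/-- Post-collisional velocity `v'`. -/
def vpr (Ifun Jfun : V3 → V3) (v w : V3) (θ φ : ℝ) : V3 :=
  v - ((1 - Real.cos θ) / 2) • (v - w) + (Real.sin θ / 2) • Gam Ifun Jfun (v - w) φ

/-- Post-collisional velocity `v'_*`. -/
def vspr (Ifun Jfun : V3 → V3) (v w : V3) (θ φ : ℝ) : V3 :=
  w + ((1 - Real.cos θ) / 2) • (v - w) - (Real.sin θ / 2) • Gam Ifun Jfun (v - w) φ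

/-- Assumption `H₂(ν)`: `β` is measurable and `κ₁ θ^{-ν-1} ≤ β(θ) ≤ κ₂ θ^{-ν-1}` on `(0,π]`. -/
def H2cond (ν κ₁ κ₂ : ℝ) (β : ℝ → ℝ) : Prop :=
  Measurable β ∧ ∀ θ ∈ Ioc (0:ℝ) π, κ₁ * θ ^ (-ν - 1) ≤ β θ ∧ β θ ≤ κ₂ * θ ^ (-ν - 1)

/-- Bounded `C²` functions with bounded derivatives. -/
def C2b (Φ : V3 → ℝ) : Prop :=
  ContDiff ℝ 2 Φ ∧ ∀ k : ℕ, k ≤ 2 → ∃ C : ℝ, ∀ x, ‖iteratedFDeriv ℝ k Φ x‖ ≤ C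

/-- Boltzmann collision integral (hard potential exponent `γ`, angular cross section `β`)
tested against a function `Φ`. -/
def collInt (γ : ℝ) (β : ℝ → ℝ) (Ifun Jfun : V3 → V3) (f : Measure V3) (Φ : V3 → ℝ) : ℝ :=
  ∫ v, ∫ w,
    (∫ θ in Ioc (0:ℝ) π,
      (∫ φ in Ico (0:ℝ) (2 * π),
        (Φ (vpr Ifun Jfun v w θ φ) + Φ (vspr Ifun Jfun v w θ φ) - Φ v - Φ w)) * β θ)
    * ‖v - w‖ ^ γ ∂f ∂f

/-- Weak solution of the spatially homogeneous Boltzmann equation. -/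
structure WeakSol (γ : ℝ) (β : ℝ → ℝ) (Ifun Jfun : V3 → V3) (f : ℝ → Measure V3) : Prop where
  prob : ∀ t : ℝ, 0 ≤ t → IsProbabilityMeasure (f t)
  weakCont : ∀ g : V3 → ℝ, Continuous g → (∃ C, ∀ x, |g x| ≤ C) →
    ContinuousOn (fun t => ∫ v, g v ∂(f t)) (Ici (0:ℝ))
  momentum : ∀ t : ℝ, 0 ≤ t → (∫ v, v ∂(f t)) = 0
  energy : ∀ t : ℝ, 0 ≤ t → mom 2 (f t) = 1
  momBound : ∀ p : ℝ, 0 ≤ p → ∀ t₀ : ℝ, 0 < t₀ →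
    ∃ C : ℝ, ∀ t : ℝ, t₀ ≤ t → momL p (f t) ≤ ENNReal.ofReal C
  weakForm : ∀ Φ : V3 → ℝ, C2b Φ → ∀ t : ℝ, 0 ≤ t →
    HasDerivWithinAt (fun s => ∫ v, Φ v ∂(f s)) (collInt γ β Ifun Jfun (f t) Φ) (Ici (0:ℝ)) t

/-! Since `Γ(v - v⁎, φ)` is orthogonal to `v - v⁎` and has the same length,
`|v'|² = a + b cos φ + c sin φ` with `a = ((1+cos θ)/2)|v|² + ((1-cos θ)/2)|v⁎|²` and
`(b, c) = sin θ (v·I(v-v⁎), v·J(v-v⁎))`; Parseval's identity in the frame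
`(v-v⁎, I(v-v⁎), J(v-v⁎))` gives `b² + c² = sin²θ (|v|²|v⁎|² - (v·v⁎)²)`. A phase shift
replaces `b cos φ + c sin φ` by `√(b²+c²) cos φ`, and the trinomial expansion of
`(x + y + r cos φ)ⁿ`, together with the averages of `cosᵏ φ` (zero for odd `k`,
`C(k, k/2)/2ᵏ` for even `k`), yields the sum; its terms with `i = n` or `j = n` are the two
leading terms. -/

open scoped RealInnerProductSpace

theorem sum_sq_inner_eq_of_pairwise_orthogonal {E : Type*} [NormedAddCommGroup E]
    [InnerProductSpace ℝ E] [FiniteDimensional ℝ E] (hE : Module.finrank ℝ E = 3) {X Y Z : E}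
    (hY : ‖Y‖ = ‖X‖) (hZ : ‖Z‖ = ‖X‖) (hXY : ⟪X, Y⟫ = 0) (hXZ : ⟪X, Z⟫ = 0) (hYZ : ⟪Y, Z⟫ = 0)
    (v : E) : ⟪v, X⟫ ^ 2 + ⟪v, Y⟫ ^ 2 + ⟪v, Z⟫ ^ 2 = ‖v‖ ^ 2 * ‖X‖ ^ 2 := by
  rcases eq_or_ne X 0 with rfl | hX
  · simp_all
  have hXn : ‖X‖ ≠ 0 := norm_ne_zero_iff.mpr hX
  set e : Fin 3 → E := fun i => ‖X‖⁻¹ • ![X, Y, Z] i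
  have he : Orthonormal ℝ e := by
    refine ⟨fun i => ?_, fun i j hij => ?_⟩
    · fin_cases i <;> simp [e, norm_smul, hY, hZ, hXn]
    · fin_cases i <;> fin_cases j <;>
        simp_all [e, real_inner_smul_left, real_inner_smul_right, real_inner_comm Y X,
          real_inner_comm Z X, real_inner_comm Z Y]
  have hcard : Fintype.card (Fin 3) = Module.finrank ℝ E := by simp [hE]
  let b := (basisOfOrthonormalOfCardEqFinrank he hcard).toOrthonormalBasis
    (by rwa [coe_basisOfOrthonormalOfCardEqFinrank])
  have hb := b.sum_sq_inner_left v
  simp only [b, Module.Basis.coe_toOrthonormalBasis, coe_basisOfOrthonormalOfCardEqFinrank,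
    Fin.sum_univ_three, e, real_inner_smul_right, Matrix.cons_val_zero, Matrix.cons_val_one,
    Matrix.cons_val_two, Matrix.head_cons, Matrix.tail_cons, mul_pow, inv_pow] at hb
  field_simp at hb
  linear_combination hb

theorem norm_sub_smul_add_smul_sq {E : Type*} [NormedAddCommGroup E] [InnerProductSpace ℝ E]
    {v w G : E} (hG : ⟪v - w, G⟫ = 0) (hGn : ‖G‖ = ‖v - w‖) (θ : ℝ) :
    ‖v - ((1 - cos θ) / 2) • (v - w) + (sin θ / 2) • G‖ ^ 2 =
      (1 + cos θ) / 2 * ‖v‖ ^ 2 + (1 - cos θ) / 2 * ‖w‖ ^ 2 + sin θ * ⟪v, G⟫ := by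
  have hvw : ‖v - w‖ ^ 2 = ‖v‖ ^ 2 - 2 * ⟪v, w⟫ + ‖w‖ ^ 2 := norm_sub_sq_real v w
  have hv : ⟪v, v - w⟫ = ‖v‖ ^ 2 - ⟪v, w⟫ := by rw [inner_sub_right, real_inner_self_eq_norm_sq]
  rw [norm_add_sq_real, norm_sub_sq_real, norm_smul, norm_smul, hGn, inner_sub_left]
  simp only [real_inner_smul_left, real_inner_smul_right, hG, hv, Real.norm_eq_abs, mul_pow,
    sq_abs, hvw]
  linear_combination (‖v‖ ^ 2 - 2 * ⟪v, w⟫ + ‖w‖ ^ 2) / 4 * sin_sq_add_cos_sq θ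

namespace IsFrame

variable {Ifun Jfun : V3 → V3}

theorem inner_Gam (hF : IsFrame Ifun Jfun) (X : V3) (φ : ℝ) : ⟪X, Gam Ifun Jfun X φ⟫ = 0 := by
  rcases eq_or_ne X 0 with rfl | hX
  · simp
  · simp [Gam, inner_add_right, real_inner_smul_right, hF.inner_X_I X hX, hF.inner_X_J X hX]

theorem norm_Gam (hF : IsFrame Ifun Jfun) (X : V3) (φ : ℝ) : ‖Gam Ifun Jfun X φ‖ = ‖X‖ := by
  rcases eq_or_ne X 0 with rfl | hX
  · simp [Gam, hF.I_zero, hF.J_zero]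
  rw [← sq_eq_sq₀ (norm_nonneg _) (norm_nonneg _), Gam, norm_add_sq_real, norm_smul, norm_smul,
    real_inner_smul_left, real_inner_smul_right, hF.inner_I_J X hX, hF.norm_I X hX,
    hF.norm_J X hX, Real.norm_eq_abs, Real.norm_eq_abs, mul_pow, mul_pow, sq_abs, sq_abs]
  linear_combination ‖X‖ ^ 2 * cos_sq_add_sin_sq φ

theorem norm_vpr_sq (hF : IsFrame Ifun Jfun) (v w : V3) (θ φ : ℝ) :
    ‖vpr Ifun Jfun v w θ φ‖ ^ 2 =
      (1 + cos θ) / 2 * ‖v‖ ^ 2 + (1 - cos θ) / 2 * ‖w‖ ^ 2 +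
        (sin θ * ⟪v, Ifun (v - w)⟫ * cos φ + sin θ * ⟪v, Jfun (v - w)⟫ * sin φ) := by
  rw [vpr, norm_sub_smul_add_smul_sq (hF.inner_Gam _ φ) (hF.norm_Gam _ φ), Gam, inner_add_right,
    real_inner_smul_right, real_inner_smul_right]
  ring

theorem inner_I_sq_add_inner_J_sq (hF : IsFrame Ifun Jfun) (v w : V3) :
    ⟪v, Ifun (v - w)⟫ ^ 2 + ⟪v, Jfun (v - w)⟫ ^ 2 = ‖v‖ ^ 2 * ‖w‖ ^ 2 - ⟪v, w⟫ ^ 2 := by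
  have hvw : ‖v - w‖ ^ 2 = ‖v‖ ^ 2 - 2 * ⟪v, w⟫ + ‖w‖ ^ 2 := norm_sub_sq_real v w
  have hv : ⟪v, v - w⟫ = ‖v‖ ^ 2 - ⟪v, w⟫ := by rw [inner_sub_right, real_inner_self_eq_norm_sq]
  rcases eq_or_ne (v - w) 0 with hX | hX
  · rw [hX, hF.I_zero, hF.J_zero, sub_eq_zero.mp hX, real_inner_self_eq_norm_sq]
    simp
    ring
  have hpars := sum_sq_inner_eq_of_pairwise_orthogonal (finrank_euclideanSpace_fin)
    (hF.norm_I _ hX) (hF.norm_J _ hX) (hF.inner_X_I _ hX) (hF.inner_X_J _ hX)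
    (hF.inner_I_J _ hX) v
  rw [hv, hvw] at hpars
  linear_combination hpars

end IsFrame

theorem integral_cos_pow_odd_two_pi (m : ℕ) : ∫ x in 0..2 * π, cos x ^ (2 * m + 1) = 0 := by
  simpa using integral_sin_pow_mul_cos_pow_odd (a := 0) (b := 2 * π) 0 m

theorem integral_cos_pow_even_two_pi (m : ℕ) :
    ∫ x in 0..2 * π, cos x ^ (2 * m) = 2 * π * (m.centralBinom / 4 ^ m) := by
  induction m with
  | zero => simp
  | succ m ih =>
    have hrec : ((m + 1 : ℕ) : ℝ) * (m + 1).centralBinom = 2 * (2 * m + 1) * m.centralBinom := by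
      exact_mod_cast Nat.succ_mul_centralBinom_succ m
    rw [show 2 * (m + 1) = 2 * m + 2 by ring, integral_cos_pow, ih]
    simp only [cos_two_pi, sin_two_pi, cos_zero, sin_zero, mul_zero, sub_zero, zero_div, zero_add]
    push_cast at hrec ⊢
    rw [pow_succ]
    field_simp
    linear_combination -2 * hrec

theorem integral_comp_mul_cos_add_mul_sin {E : Type*} [NormedAddCommGroup E] [NormedSpace ℝ E]
    (g : ℝ → E) (b c : ℝ) :
    ∫ x in 0..2 * π, g (b * cos x + c * sin x) =
      ∫ x in 0..2 * π, g (√(b ^ 2 + c ^ 2) * cos x) := by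
  set z : ℂ := ⟨b, c⟩
  have hz : ‖z‖ = √(b ^ 2 + c ^ 2) := by simp [z, Complex.norm_def, Complex.normSq_mk, sq]
  have hb : ‖z‖ * cos z.arg = b := Complex.norm_mul_cos_arg z
  have hc : ‖z‖ * sin z.arg = c := Complex.norm_mul_sin_arg z
  have hshift : ∀ x, b * cos x + c * sin x = ‖z‖ * cos (x - z.arg) := fun x => by
    rw [cos_sub]
    linear_combination (-cos x) * hb - sin x * hc
  have hper : Function.Periodic (fun x => g (‖z‖ * cos x)) (2 * π) := fun x => by
    simp [cos_add_two_pi]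
  simp_rw [hshift, ← hz]
  rw [intervalIntegral.integral_comp_sub_right (fun x => g (‖z‖ * cos x)), zero_sub,
    show 2 * π - z.arg = -z.arg + 2 * π by ring, hper.intervalIntegral_add_eq (-z.arg) 0, zero_add]

section Trinomial

open Finset Nat

theorem add_add_pow_eq_sum {R : Type*} [CommSemiring R] (x y z : R) (n : ℕ) :
    (x + y + z) ^ n = ∑ i ∈ range (n + 1), ∑ j ∈ range (n - i + 1),
      (n.choose i * (n - i).choose j : ℕ) * x ^ i * y ^ j * z ^ (n - i - j) := by
  rw [add_assoc, add_pow]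
  refine sum_congr rfl fun i _ => ?_
  rw [add_pow, mul_sum, sum_mul]
  refine sum_congr rfl fun j _ => ?_
  rw [Nat.sub_sub, Nat.add_comm i j, ← Nat.sub_sub]
  push_cast
  ring

theorem choose_mul_choose_mul_centralBinom_mul_factorial {i j m n : ℕ} (h : i + j + 2 * m = n) :
    n.choose i * (n - i).choose j * m.centralBinom * (i ! * j ! * m ! ^ 2) = n ! := by
  have hi := Nat.choose_mul_factorial_mul_factorial (show i ≤ n by omega)
  have hj := Nat.choose_mul_factorial_mul_factorial (show j ≤ n - i by omega)
  have hm := Nat.choose_mul_factorial_mul_factorial (show m ≤ 2 * m by omega)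
  rw [show n - i - j = 2 * m by omega] at hj
  rw [show 2 * m - m = m by omega, ← Nat.centralBinom_eq_two_mul_choose] at hm
  rw [← hi, ← hj, ← hm]
  ring

/-- The summand of `Λ_n`, with `x = ((1+cos θ)/2)|v|²`, `y = ((1-cos θ)/2)|v⁎|²` and
`ρ = (sin θ / 2)² (|v|²|v⁎|² - (v·v⁎)²)`. -/
def lambdaTerm (n i j : ℕ) (x y ρ : ℝ) : ℝ :=
  if i + j ≤ n ∧ Even (n - i - j) then
    ((n ! : ℝ) / ((i ! * j ! * ((n - i - j) / 2) ! ^ 2 : ℕ) : ℝ)) * x ^ i * y ^ j *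
      ρ ^ ((n - i - j) / 2)
  else 0

theorem lambdaTerm_eq_zero_of_lt {n i j : ℕ} (h : n < i + j) (x y ρ : ℝ) :
    lambdaTerm n i j x y ρ = 0 :=
  if_neg fun h' => by omega

theorem lambdaTerm_self_zero (n : ℕ) (x y ρ : ℝ) : lambdaTerm n n 0 x y ρ = x ^ n := by
  simp [lambdaTerm, (Nat.factorial_pos n).ne']

theorem lambdaTerm_zero_self (n : ℕ) (x y ρ : ℝ) : lambdaTerm n 0 n x y ρ = y ^ n := by
  simp [lambdaTerm, (Nat.factorial_pos n).ne']


theorem integral_trinomial_term_eq_lambdaTerm {n i j : ℕ} (h : i + j ≤ n) (x y r : ℝ) :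
    ∫ t in 0..2 * π, ((n.choose i * (n - i).choose j : ℕ) : ℝ) * x ^ i * y ^ j *
      (r * cos t) ^ (n - i - j) = 2 * π * lambdaTerm n i j x y (r ^ 2 / 4) := by
  simp_rw [mul_pow, ← mul_assoc]
  rw [intervalIntegral.integral_const_mul]
  obtain ⟨m, hm | hm⟩ := Nat.even_or_odd' (n - i - j)
  · have hcoef :=
      choose_mul_choose_mul_centralBinom_mul_factorial (show i + j + 2 * m = n by omega)
    have hfact : ((i ! * j ! * m ! ^ 2 : ℕ) : ℝ) ≠ 0 := by positivity
    rw [hm, integral_cos_pow_even_two_pi, lambdaTerm, if_pos ⟨h, hm ▸ even_two_mul m⟩, hm,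
      Nat.mul_div_cancel_left m two_pos, ← hcoef]
    push_cast [div_pow] at hfact ⊢
    field_simp
    ring
  · rw [hm, integral_cos_pow_odd_two_pi, lambdaTerm,
      if_neg fun h' => Nat.not_even_iff_odd.mpr (hm ▸ odd_two_mul_add_one m) h'.2]
    ring

theorem integral_add_add_mul_cos_pow (x y r : ℝ) (n : ℕ) :
    ∫ t in 0..2 * π, (x + y + r * cos t) ^ n =
      2 * π * ∑ i ∈ range (n + 1), ∑ j ∈ range (n + 1), lambdaTerm n i j x y (r ^ 2 / 4) := by
  simp_rw [add_add_pow_eq_sum]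
  rw [intervalIntegral.integral_finsetSum
    fun i _ => (by fun_prop : Continuous _).intervalIntegrable _ _, mul_sum]
  refine sum_congr rfl fun i hi => ?_
  rw [intervalIntegral.integral_finsetSum
    fun j _ => (by fun_prop : Continuous _).intervalIntegrable _ _, mul_sum]
  symm
  rw [← sum_subset (range_subset_range.mpr (show n - i + 1 ≤ n + 1 by omega))]
  · refine sum_congr rfl fun j hj => (integral_trinomial_term_eq_lambdaTerm ?_ x y r).symm
    simp only [Finset.mem_range] at hi hj
    omega
  · intro j _ hj
    simp only [Finset.mem_range, not_lt] at hj
    rw [lambdaTerm_eq_zero_of_lt (by omega), mul_zero]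

theorem sum_range_succ_sum_range_succ_of_eq_zero {M : Type*} [AddCommMonoid M] {n : ℕ}
    (hn : 0 < n) (g : ℕ → ℕ → M) (hg : ∀ i j, n < i + j → g i j = 0) :
    ∑ i ∈ range (n + 1), ∑ j ∈ range (n + 1), g i j =
      g n 0 + g 0 n + ∑ i ∈ range n, ∑ j ∈ range n, g i j := by
  have hrow : ∑ j ∈ range (n + 1), g n j = g n 0 :=
    sum_eq_single_of_mem 0 (by simp) fun j _ hj => hg _ _ (by omega)
  have hcol : ∑ i ∈ range n, g i n = g 0 n :=
    sum_eq_single_of_mem 0 (Finset.mem_range.mpr hn) fun i _ hi => hg _ _ (by omega)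
  rw [sum_range_succ, hrow, sum_congr rfl fun i _ => sum_range_succ (g i) n, sum_add_distrib,
    hcol]
  abel

theorem lambdaTerm_mul_sq (n i j : ℕ) (a b p q t D : ℝ) :
    lambdaTerm n i j (a * p ^ 2) (b * q ^ 2) (t ^ 2 * D) =
      if i + j ≤ n ∧ Even (n - i - j) then
        ((n ! : ℝ) / ((i ! * j ! * ((n - i - j) / 2) ! ^ 2 : ℕ) : ℝ)) * a ^ i * b ^ j *
          t ^ (n - i - j) * p ^ (2 * i) * q ^ (2 * j) * D ^ ((n - i - j) / 2)
      else 0 := by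
  unfold lambdaTerm
  split_ifs with h
  · rw [mul_pow, mul_pow, mul_pow, ← pow_mul, ← pow_mul, ← pow_mul,
      Nat.two_mul_div_two_of_even h.2]
    ring
  · rfl

end Trinomial

theorem phi_average_formula_general
    (Ifun Jfun : V3 → V3) (hF : IsFrame Ifun Jfun)
    (n : ℕ) (hn : 2 ≤ n) (v w : V3) (θ : ℝ) :
    (1 / (2 * π)) * ∫ φ in Ico (0:ℝ) (2 * π), ‖vpr Ifun Jfun v w θ φ‖ ^ (2 * n)
    = ((1 + Real.cos θ) / 2) ^ n * ‖v‖ ^ (2 * n)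
      + ((1 - Real.cos θ) / 2) ^ n * ‖w‖ ^ (2 * n)
      + ∑ i ∈ Finset.range n, ∑ j ∈ Finset.range n,
          (if i + j ≤ n ∧ Even (n - i - j) then
            ((n.factorial : ℝ)
              / ((i.factorial * j.factorial * ((n - i - j) / 2).factorial ^ 2 : ℕ) : ℝ))
            * ((1 + Real.cos θ) / 2) ^ i * ((1 - Real.cos θ) / 2) ^ j
            * (Real.sin θ / 2) ^ (n - i - j)
            * ‖v‖ ^ (2 * i) * ‖w‖ ^ (2 * j)
            * (‖v‖ ^ 2 * ‖w‖ ^ 2 - (inner ℝ v w : ℝ) ^ 2) ^ ((n - i - j) / 2)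
          else 0) := by
  set b := sin θ * ⟪v, Ifun (v - w)⟫
  set c := sin θ * ⟪v, Jfun (v - w)⟫
  have hbc : √(b ^ 2 + c ^ 2) ^ 2 / 4 = (sin θ / 2) ^ 2 * (‖v‖ ^ 2 * ‖w‖ ^ 2 - ⟪v, w⟫ ^ 2) := by
    rw [sq_sqrt (by positivity), ← hF.inner_I_sq_add_inner_J_sq]
    ring
  have hint : ∫ φ in Ico (0:ℝ) (2 * π), ‖vpr Ifun Jfun v w θ φ‖ ^ (2 * n) =
      ∫ φ in 0..2 * π, ((1 + cos θ) / 2 * ‖v‖ ^ 2 + (1 - cos θ) / 2 * ‖w‖ ^ 2 +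
        (b * cos φ + c * sin φ)) ^ n := by
    simp_rw [integral_Ico_eq_integral_Ioc, ← intervalIntegral.integral_of_le two_pi_pos.le,
      pow_mul, hF.norm_vpr_sq, b, c]
  rw [hint, integral_comp_mul_cos_add_mul_sin (fun s => (_ + s) ^ n),
    integral_add_add_mul_cos_pow, ← mul_assoc, one_div_mul_cancel two_pi_pos.ne', one_mul,
    sum_range_succ_sum_range_succ_of_eq_zero (by omega) _
      fun i j h => lambdaTerm_eq_zero_of_lt h _ _ _,
    lambdaTerm_self_zero, lambdaTerm_zero_self, hbc]
  simp_rw [lambdaTerm_mul_sq, mul_pow, ← pow_mul]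

/-- The `φ`-average `Θ_n(v,v⁎,θ) = (1/2π) ∫₀^{2π} |v'|^{2n} dφ` equals
`((1+cosθ)/2)^n |v|^{2n} + ((1-cosθ)/2)^n |v⁎|^{2n} + Λ_n(v,v⁎,θ)`, where `Λ_n` is the sum
over triples `(i,j,k)` with `i+j+k = n`, `i ≤ n-1`, `j ≤ n-1`, `k` even, of
`(n!/(i!j!((k/2)!)²)) ((1+cosθ)/2)^i ((1-cosθ)/2)^j ((sinθ)/2)^k |v|^{2i} |v⁎|^{2j}
(|v|²|v⁎|² - (v·v⁎)²)^{k/2}`. -/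
theorem phi_average_formula
    (Ifun Jfun : V3 → V3) (hF : IsFrame Ifun Jfun)
    (n : ℕ) (hn : 2 ≤ n) (v w : V3) (θ : ℝ) (hθ : θ ∈ Ioc (0:ℝ) π) :
    (1 / (2 * π)) * ∫ φ in Ico (0:ℝ) (2 * π), ‖vpr Ifun Jfun v w θ φ‖ ^ (2 * n)
    = ((1 + Real.cos θ) / 2) ^ n * ‖v‖ ^ (2 * n)
      + ((1 - Real.cos θ) / 2) ^ n * ‖w‖ ^ (2 * n)
      + ∑ i ∈ Finset.range n, ∑ j ∈ Finset.range n,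
          (if i + j ≤ n ∧ Even (n - i - j) then
            ((n.factorial : ℝ)
              / ((i.factorial * j.factorial * ((n - i - j) / 2).factorial ^ 2 : ℕ) : ℝ))
            * ((1 + Real.cos θ) / 2) ^ i * ((1 - Real.cos θ) / 2) ^ j
            * (Real.sin θ / 2) ^ (n - i - j)
            * ‖v‖ ^ (2 * i) * ‖w‖ ^ (2 * j)
            * (‖v‖ ^ 2 * ‖w‖ ^ 2 - (inner ℝ v w : ℝ) ^ 2) ^ ((n - i - j) / 2)
          else 0) :=
  phi_average_formula_general Ifun Jfun hF n hn v w θ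
end
end

section
/- For all v, v* ∈ ℝ³ and every k ∈ ℕ, (1/(2π)) ∫₀^{2π} (v · Γ(v−v*,φ))^k dφ = 0 if k is odd, and equals (k!/(2^k ((k/2)!)²)) (|v|²|v*|² − (v·v*)²)^{k/2} if k is even. -/
/-!
Write `⟪v, Γ(X, φ)⟫ = a cos φ + b sin φ = √(a² + b²) cos (φ - φ₀)`. Averaging over a period
removes the phase, leaving `(a² + b²)^(k/2)` times the mean of `cos^k`, which is the Wallis
integral: `0` for odd `k` and `k! / (2^k ((k/2)!)²)` for even `k`. Since
`(X/|X|, I X/|X|, J X/|X|)` is an orthonormal basis, Parseval gives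
`a² + b² = |v|² |X|² - ⟪v, X⟫²`, and for `X = v - v⁎` this Gram determinant equals
`|v|² |v⁎|² - ⟪v, v⁎⟫²`.
-/

open MeasureTheory Real Set

noncomputable section

open intervalIntegral

theorem exists_mul_cos_add_mul_sin_eq (a b : ℝ) :
    ∃ φ₀ : ℝ, ∀ φ, a * cos φ + b * sin φ = √(a ^ 2 + b ^ 2) * cos (φ - φ₀) := by
  set z : ℂ := ⟨a, b⟩
  have hz : ‖z‖ = √(a ^ 2 + b ^ 2) := by
    rw [Complex.norm_def, Complex.normSq_apply, sq, sq]
  have hre : ‖z‖ * cos z.arg = a := Complex.norm_mul_cos_arg z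
  have him : ‖z‖ * sin z.arg = b := Complex.norm_mul_sin_arg z
  refine ⟨z.arg, fun φ => ?_⟩
  rw [cos_sub, ← hz]
  linear_combination (-cos φ) * hre - sin φ * him

theorem Function.Periodic.intervalIntegral_comp_sub_eq {f : ℝ → ℝ} {T : ℝ}
    (hf : Function.Periodic f T) (c : ℝ) :
    ∫ x in (0 : ℝ)..T, f (x - c) = ∫ x in (0 : ℝ)..T, f x := by
  rw [integral_comp_sub_right, zero_sub, sub_eq_neg_add, hf.intervalIntegral_add_eq (-c) 0,
    zero_add]

theorem integral_Ico_mul_cos_add_mul_sin_pow (a b : ℝ) (k : ℕ) :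
    ∫ φ in Ico 0 (2 * π), (a * cos φ + b * sin φ) ^ k
      = √(a ^ 2 + b ^ 2) ^ k * ∫ x in (0 : ℝ)..2 * π, cos x ^ k := by
  obtain ⟨φ₀, hφ₀⟩ := exists_mul_cos_add_mul_sin_eq a b
  have hper : Function.Periodic (fun x => cos x ^ k) (2 * π) := fun x => by
    simp only [cos_periodic x]
  rw [integral_Ico_eq_integral_Ioo, ← integral_Ioc_eq_integral_Ioo,
    ← integral_of_le (by positivity), ← hper.intervalIntegral_comp_sub_eq φ₀,
    ← intervalIntegral.integral_const_mul]
  simp only [hφ₀, mul_pow]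

theorem integral_cos_pow_eq_integral_sin_pow (k : ℕ) :
    ∫ x in (0 : ℝ)..2 * π, cos x ^ k = ∫ x in (0 : ℝ)..2 * π, sin x ^ k := by
  have hper : Function.Periodic (fun x => sin x ^ k) (2 * π) := fun x => by
    simp only [sin_periodic x]
  rw [← hper.intervalIntegral_comp_sub_eq (-(π / 2))]
  simp only [sub_neg_eq_add, sin_add_pi_div_two]

theorem integral_sin_pow_zero_two_pi (k : ℕ) :
    ∫ x in (0 : ℝ)..2 * π, sin x ^ k = (1 + (-1) ^ k) * ∫ x in (0 : ℝ)..π, sin x ^ k := by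
  have hint (a b : ℝ) : IntervalIntegrable (fun x => sin x ^ k) volume a b :=
    (continuous_sin.pow k).intervalIntegrable a b
  have hsecond : ∫ x in π..2 * π, sin x ^ k = (-1) ^ k * ∫ x in (0 : ℝ)..π, sin x ^ k := by
    calc ∫ x in π..2 * π, sin x ^ k = ∫ x in (0 : ℝ)..π, sin (x + π) ^ k := by
          rw [integral_comp_add_right (fun x => sin x ^ k), zero_add, two_mul]
      _ = (-1) ^ k * ∫ x in (0 : ℝ)..π, sin x ^ k := by
          simp only [sin_add_pi, neg_pow (sin _), intervalIntegral.integral_const_mul]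
  rw [← integral_add_adjacent_intervals (hint 0 π) (hint π _), hsecond]
  ring

theorem prod_range_odd_div_even (n : ℕ) :
    ∏ i ∈ Finset.range n, (2 * (i : ℝ) + 1) / (2 * i + 2)
      = (2 * n).factorial / (2 ^ (2 * n) * n.factorial ^ 2) := by
  induction n with
  | zero => simp
  | succ n ih =>
    rw [Finset.prod_range_succ, ih, show 2 * (n + 1) = 2 * n + 1 + 1 by ring]
    simp only [Nat.factorial_succ]
    push_cast
    field_simp
    ring

theorem integral_cos_pow_odd_zero_two_pi (n : ℕ) :
    ∫ x in (0 : ℝ)..2 * π, cos x ^ (2 * n + 1) = 0 := by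
  rw [integral_cos_pow_eq_integral_sin_pow, integral_sin_pow_zero_two_pi, pow_succ, pow_mul]
  norm_num

theorem integral_cos_pow_even_zero_two_pi (n : ℕ) :
    ∫ x in (0 : ℝ)..2 * π, cos x ^ (2 * n)
      = 2 * π * ((2 * n).factorial / (2 ^ (2 * n) * n.factorial ^ 2)) := by
  rw [integral_cos_pow_eq_integral_sin_pow, integral_sin_pow_zero_two_pi, integral_sin_pow_even,
    prod_range_odd_div_even, pow_mul (-1 : ℝ)]
  norm_num
  ring

theorem Orthonormal.sum_inner_sq_eq_norm_sq {ι E : Type*} [Fintype ι] [NormedAddCommGroup E]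
    [InnerProductSpace ℝ E] [FiniteDimensional ℝ E] {e : ι → E} (he : Orthonormal ℝ e)
    (hcard : Fintype.card ι = Module.finrank ℝ E) (v : E) :
    ∑ i, (inner ℝ v (e i) : ℝ) ^ 2 = ‖v‖ ^ 2 := by
  have hsp : ⊤ ≤ Submodule.span ℝ (range e) :=
    (he.linearIndependent.span_eq_top_of_card_eq_finrank' hcard).ge
  simpa [sq_abs] using (OrthonormalBasis.mk he hsp).sum_sq_norm_inner_left v

theorem orthonormal_fin_three {E : Type*} [NormedAddCommGroup E] [InnerProductSpace ℝ E]
    {x y z : E} (hx : ‖x‖ = 1) (hy : ‖y‖ = 1) (hz : ‖z‖ = 1) (hxy : (inner ℝ x y : ℝ) = 0)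
    (hxz : (inner ℝ x z : ℝ) = 0) (hyz : (inner ℝ y z : ℝ) = 0) :
    Orthonormal ℝ ![x, y, z] := by
  refine ⟨fun i => by fin_cases i <;> assumption, fun i j hij => ?_⟩
  fin_cases i <;> fin_cases j <;> simp_all [real_inner_comm]

theorem norm_sq_mul_norm_sub_sq_sub_inner_sq {E : Type*} [NormedAddCommGroup E]
    [InnerProductSpace ℝ E] (v w : E) :
    ‖v‖ ^ 2 * ‖v - w‖ ^ 2 - (inner ℝ v (v - w) : ℝ) ^ 2
      = ‖v‖ ^ 2 * ‖w‖ ^ 2 - (inner ℝ v w : ℝ) ^ 2 := by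
  rw [norm_sub_sq_real, inner_sub_right, real_inner_self_eq_norm_sq]
  ring

namespace IsFrame

variable {Ifun Jfun : V3 → V3}

theorem orthonormal (hF : IsFrame Ifun Jfun) {X : V3} (hX : X ≠ 0) :
    Orthonormal ℝ ![‖X‖⁻¹ • X, ‖X‖⁻¹ • Ifun X, ‖X‖⁻¹ • Jfun X] := by
  apply orthonormal_fin_three <;>
    simp [norm_smul, real_inner_smul_left, real_inner_smul_right, hX, hF.norm_I X hX,
      hF.norm_J X hX, hF.inner_X_I X hX, hF.inner_X_J X hX, hF.inner_I_J X hX]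

theorem inner_sq_add_inner_sq (hF : IsFrame Ifun Jfun) (v X : V3) :
    (inner ℝ v (Ifun X) : ℝ) ^ 2 + (inner ℝ v (Jfun X) : ℝ) ^ 2
      = ‖v‖ ^ 2 * ‖X‖ ^ 2 - (inner ℝ v X : ℝ) ^ 2 := by
  rcases eq_or_ne X 0 with rfl | hX
  · simp [hF.I_zero, hF.J_zero]
  have := (hF.orthonormal hX).sum_inner_sq_eq_norm_sq (by simp) v
  simp only [Fin.sum_univ_three, Matrix.cons_val, real_inner_smul_right, mul_pow] at this
  field_simp at this
  linear_combination this

end IsFrame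

theorem inner_Gam (Ifun Jfun : V3 → V3) (v X : V3) (φ : ℝ) :
    (inner ℝ v (Gam Ifun Jfun X φ) : ℝ)
      = inner ℝ v (Ifun X) * cos φ + inner ℝ v (Jfun X) * sin φ := by
  simp only [Gam, inner_add_right, real_inner_smul_right]
  ring

/-- Wallis-type computation: for all `v, v⁎ ∈ ℝ³` and `k ∈ ℕ`,
`(1/2π) ∫₀^{2π} (v · Γ(v-v⁎,φ))^k dφ` is `0` if `k` is odd, and equals
`(k!/(2^k ((k/2)!)²)) (|v|²|v⁎|² - (v·v⁎)²)^{k/2}` if `k` is even. -/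
theorem wallis_phi_average
    (Ifun Jfun : V3 → V3) (hF : IsFrame Ifun Jfun) (v w : V3) (k : ℕ) :
    (Odd k →
      (1 / (2 * π)) * ∫ φ in Ico (0:ℝ) (2 * π),
        (inner ℝ v (Gam Ifun Jfun (v - w) φ) : ℝ) ^ k = 0)
    ∧ (Even k →
      (1 / (2 * π)) * ∫ φ in Ico (0:ℝ) (2 * π),
        (inner ℝ v (Gam Ifun Jfun (v - w) φ) : ℝ) ^ k
      = ((k.factorial : ℝ) / ((2 ^ k * (k / 2).factorial ^ 2 : ℕ) : ℝ))
        * (‖v‖ ^ 2 * ‖w‖ ^ 2 - (inner ℝ v w : ℝ) ^ 2) ^ (k / 2)) := by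
  set a : ℝ := inner ℝ v (Ifun (v - w))
  set b : ℝ := inner ℝ v (Jfun (v - w))
  have hab : a ^ 2 + b ^ 2 = ‖v‖ ^ 2 * ‖w‖ ^ 2 - (inner ℝ v w : ℝ) ^ 2 := by
    rw [hF.inner_sq_add_inner_sq, norm_sq_mul_norm_sub_sq_sub_inner_sq]
  simp only [inner_Gam, integral_Ico_mul_cos_add_mul_sin_pow]
  constructor
  · rintro ⟨n, rfl⟩
    rw [integral_cos_pow_odd_zero_two_pi, mul_zero, mul_zero]
  · rintro ⟨n, rfl⟩
    rw [← two_mul, Nat.mul_div_cancel_left n two_pos, integral_cos_pow_even_zero_two_pi,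
      pow_mul, Real.sq_sqrt (by positivity), hab]
    push_cast
    field_simp
end
end

section
/- Assume H₂(ν) for some ν ∈ (0,2). There is a constant ζ₁ ∈ (0,∞), depending only on ν, κ₁, κ₂ (one may take ζ₁ = κ₁/(20(2−ν))), such that for every integer n ≥ 2, a_n := ∫₀^π (1 − ((1+cos θ)/2)^n − ((1−cos θ)/2)^n) β(θ) dθ ≥ ζ₁ n^{ν/2}. -/
open MeasureTheory Real Set

noncomputable section

/-
With `s = sin²(θ/2) = (1 - cos θ)/2` the weight is `1 - (1 - s)ⁿ - sⁿ`. It is at most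
`n s ≤ n θ²/4`, so `β` times the weight is integrable near `0` because `ν < 2`. On the window
`2/√n ≤ θ ≤ π/2` one has `s ≤ 1/2` and `n s ≥ n θ²/π² ≥ 4/π²`, and `(1 - s)ⁿ ≤ (1 + n s)⁻¹`
(since `(1 - s²)ⁿ ≤ 1`), so the weight is bounded below by the absolute constant
`3/4 - (1 + 4/π²)⁻¹ > 0`. Integrating `κ₁ θ^{-ν-1}` over the window gives a multiple of
`(2/√n)^{-ν} = 2^{-ν} n^{ν/2}`.
-/

section OneSubPowSubPow

variable {s : ℝ}

lemma one_sub_pow_sub_pow_nonneg (hs0 : 0 ≤ s) (hs1 : s ≤ 1) {n : ℕ} (hn : 1 ≤ n) :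
    0 ≤ 1 - (1 - s) ^ n - s ^ n := by
  have h₁ : (1 - s) ^ n ≤ 1 - s := pow_le_of_le_one (by linarith) (by linarith) (by omega)
  have h₂ : s ^ n ≤ s := pow_le_of_le_one hs0 hs1 (by omega)
  linarith

lemma one_sub_pow_sub_pow_le_mul (hs0 : 0 ≤ s) (hs2 : s ≤ 2) (n : ℕ) :
    1 - (1 - s) ^ n - s ^ n ≤ n * s := by
  have bernoulli : 1 + n * -s ≤ (1 + -s) ^ n := one_add_mul_le_pow (by linarith) n
  have : 0 ≤ s ^ n := pow_nonneg hs0 n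
  rw [← sub_eq_add_neg] at bernoulli
  linarith

lemma one_sub_pow_le_inv_one_add_mul (hs0 : 0 ≤ s) (hs1 : s ≤ 1) (n : ℕ) :
    (1 - s) ^ n ≤ (1 + n * s)⁻¹ := by
  have bernoulli : 1 + n * s ≤ (1 + s) ^ n := one_add_mul_le_pow (by linarith) n
  have product : (1 - s) ^ n * (1 + s) ^ n ≤ 1 := by
    rw [← mul_pow]
    exact pow_le_one₀ (by nlinarith) (by nlinarith)
  rw [← one_div, le_div_iff₀ (by positivity)]
  calc (1 - s) ^ n * (1 + n * s) ≤ (1 - s) ^ n * (1 + s) ^ n :=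
        mul_le_mul_of_nonneg_left bernoulli (pow_nonneg (by linarith) n)
    _ ≤ 1 := product

lemma three_quarters_sub_inv_le_one_sub_pow_sub_pow (hs0 : 0 ≤ s) (hs : s ≤ 1 / 2) {n : ℕ}
    (hn : 2 ≤ n) : 3 / 4 - (1 + n * s)⁻¹ ≤ 1 - (1 - s) ^ n - s ^ n := by
  have h₁ := one_sub_pow_le_inv_one_add_mul hs0 (by linarith) n
  have h₂ : s ^ n ≤ (1 / 2) ^ 2 :=
    (pow_le_pow_left₀ hs0 hs n).trans (pow_le_pow_of_le_one (by norm_num) (by norm_num) hn)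
  linarith

end OneSubPowSubPow

def angularWeight (n : ℕ) (θ : ℝ) : ℝ :=
  1 - ((1 + cos θ) / 2) ^ n - ((1 - cos θ) / 2) ^ n

section AngularWeight

variable {n : ℕ} {θ : ℝ}

lemma angularWeight_eq (n : ℕ) (θ : ℝ) :
    angularWeight n θ = 1 - (1 - (1 - cos θ) / 2) ^ n - ((1 - cos θ) / 2) ^ n := by
  rw [angularWeight, show (1 + cos θ) / 2 = 1 - (1 - cos θ) / 2 by ring]

lemma angularWeight_nonneg (hn : 1 ≤ n) (θ : ℝ) : 0 ≤ angularWeight n θ := by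
  rw [angularWeight_eq]
  exact one_sub_pow_sub_pow_nonneg (by linarith [cos_le_one θ]) (by linarith [neg_one_le_cos θ]) hn

lemma angularWeight_le (n : ℕ) (θ : ℝ) : angularWeight n θ ≤ n * θ ^ 2 / 4 := by
  have hs : (1 - cos θ) / 2 ≤ θ ^ 2 / 4 := by linarith [one_sub_sq_div_two_le_cos (x := θ)]
  rw [angularWeight_eq]
  calc _ ≤ n * ((1 - cos θ) / 2) :=
        one_sub_pow_sub_pow_le_mul (by linarith [cos_le_one θ]) (by linarith [neg_one_le_cos θ]) n
    _ ≤ n * (θ ^ 2 / 4) := by gcongr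
    _ = n * θ ^ 2 / 4 := by ring

lemma three_quarters_sub_inv_le_angularWeight (hn : 2 ≤ n) (hnθ : 4 ≤ n * θ ^ 2)
    (hθ : |θ| ≤ π / 2) :
    3 / 4 - (1 + 4 / π ^ 2)⁻¹ ≤ angularWeight n θ := by
  obtain ⟨hθl, hθr⟩ := abs_le.mp hθ
  have hs0 : 0 ≤ (1 - cos θ) / 2 := by linarith [cos_le_one θ]
  have hs : (1 - cos θ) / 2 ≤ 1 / 2 := by linarith [cos_nonneg_of_neg_pi_div_two_le_of_le hθl hθr]
  have hsθ : θ ^ 2 / π ^ 2 ≤ (1 - cos θ) / 2 := by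
    have := cos_le_one_sub_mul_cos_sq (hθ.trans (by linarith [pi_pos]))
    calc θ ^ 2 / π ^ 2 = 2 / π ^ 2 * θ ^ 2 / 2 := by ring
      _ ≤ (1 - cos θ) / 2 := by linarith
  have hns : 4 / π ^ 2 ≤ n * ((1 - cos θ) / 2) := by
    calc 4 / π ^ 2 ≤ n * θ ^ 2 / π ^ 2 := by gcongr
      _ = n * (θ ^ 2 / π ^ 2) := by ring
      _ ≤ n * ((1 - cos θ) / 2) := by gcongr
  rw [angularWeight_eq]
  refine le_trans ?_ (three_quarters_sub_inv_le_one_sub_pow_sub_pow hs0 hs hn)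
  gcongr

lemma three_quarters_sub_inv_one_add_four_div_pi_sq_pos : 0 < 3 / 4 - (1 + 4 / π ^ 2)⁻¹ := by
  have hπ : 1 / 3 < 4 / π ^ 2 := by
    rw [lt_div_iff₀ (by positivity)]
    nlinarith [pi_lt_d2, pi_pos]
  refine sub_pos.mpr ((inv_lt_comm₀ (by positivity) (by norm_num)).mpr ?_)
  linarith

lemma integrableOn_angularWeight_mul {ν κ b : ℝ} (hν : ν < 2) {β : ℝ → ℝ} (hβm : Measurable β)
    (hβ : ∀ θ ∈ Ioc 0 b, 0 ≤ β θ ∧ β θ ≤ κ * θ ^ (-ν - 1)) (hn : 1 ≤ n) :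
    IntegrableOn (fun θ ↦ angularWeight n θ * β θ) (Ioc 0 b) := by
  have hdom : IntegrableOn (fun θ : ℝ ↦ n * κ / 4 * θ ^ (1 - ν)) (Ioc 0 b) :=
    (intervalIntegral.intervalIntegrable_rpow' (by linarith)).const_mul _ |>.def'.mono_set
      Ioc_subset_uIoc
  have hmeas : Measurable fun θ ↦ angularWeight n θ * β θ :=
    (by unfold angularWeight; fun_prop : Measurable (angularWeight n)).mul hβm
  refine hdom.mono' hmeas.aestronglyMeasurable ?_
  filter_upwards [ae_restrict_mem measurableSet_Ioc] with θ hθ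
  obtain ⟨hβ0, hβκ⟩ := hβ θ hθ
  have hw := angularWeight_nonneg hn θ
  rw [Real.norm_of_nonneg (mul_nonneg hw hβ0)]
  calc angularWeight n θ * β θ ≤ n * θ ^ 2 / 4 * (κ * θ ^ (-ν - 1)) :=
        mul_le_mul (angularWeight_le n θ) hβκ hβ0 (by positivity)
    _ = n * κ / 4 * (θ ^ (2 : ℝ) * θ ^ (-ν - 1)) := by rw [rpow_two]; ring
    _ = n * κ / 4 * θ ^ (1 - ν) := by rw [← rpow_add hθ.1]; ring_nf

end AngularWeight

lemma integral_Ioc_rpow_neg_sub_one {a b ν : ℝ} (ha : 0 < a) (hab : a ≤ b) (hν : ν ≠ 0) :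
    ∫ θ in Ioc a b, θ ^ (-ν - 1) = (a ^ (-ν) - b ^ (-ν)) / ν := by
  have hzero : (0 : ℝ) ∉ uIcc a b := by
    rw [uIcc_of_le hab]
    exact fun h ↦ ha.not_ge h.1
  rw [← intervalIntegral.integral_of_le hab,
    integral_rpow (Or.inr ⟨by contrapose! hν; linarith, hzero⟩),
    show -ν - 1 + 1 = -ν by ring, div_neg, ← neg_div, neg_sub]

lemma one_sub_div_rpow_mul_le_rpow_neg_sub_rpow_neg {a a₀ b ν : ℝ} (ha : 0 < a) (haa₀ : a ≤ a₀)
    (hb : 0 < b) (hν : 0 ≤ ν) : (1 - (a₀ / b) ^ ν) * a ^ (-ν) ≤ a ^ (-ν) - b ^ (-ν) := by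
  have hb' : b ^ (-ν) = (a / b) ^ ν * a ^ (-ν) := by
    rw [div_rpow ha.le hb.le, rpow_neg ha.le, rpow_neg hb.le]
    field_simp [(rpow_pos_of_pos ha ν).ne']
  have : (a / b) ^ ν ≤ (a₀ / b) ^ ν := by gcongr
  rw [hb']
  nlinarith [rpow_pos_of_pos ha (-ν)]

lemma two_div_sqrt_rpow_neg {x : ℝ} (hx : 0 ≤ x) (ν : ℝ) :
    (2 / √x) ^ (-ν) = 2 ^ (-ν) * x ^ (ν / 2) := by
  rw [div_rpow zero_le_two (sqrt_nonneg x), sqrt_eq_rpow, ← rpow_mul hx, div_eq_mul_inv,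
    ← rpow_neg hx]
  ring_nf

lemma sqrt_two_lt_pi_div_two : √2 < π / 2 := by
  rw [sqrt_lt' (by positivity)]
  nlinarith [pi_gt_three]

lemma two_div_sqrt_le_sqrt_two {x : ℝ} (hx : 2 ≤ x) : 2 / √x ≤ √2 :=
  calc 2 / √x ≤ 2 / √2 := div_le_div_of_nonneg_left zero_le_two (by positivity) (sqrt_le_sqrt hx)
    _ = √2 := div_sqrt

lemma two_div_sqrt_le_pi_div_two {x : ℝ} (hx : 2 ≤ x) : 2 / √x ≤ π / 2 :=
  (two_div_sqrt_le_sqrt_two hx).trans sqrt_two_lt_pi_div_two.le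

lemma mul_rpow_le_integral_Ioc_two_div_sqrt_rpow {ν x : ℝ} (hν : 0 < ν) (hx : 2 ≤ x) :
    (1 - (√2 / (π / 2)) ^ ν) * 2 ^ (-ν) / ν * x ^ (ν / 2)
      ≤ ∫ θ in Ioc (2 / √x) (π / 2), θ ^ (-ν - 1) := by
  have ha : 0 < 2 / √x := by positivity
  rw [integral_Ioc_rpow_neg_sub_one ha (two_div_sqrt_le_pi_div_two hx) hν.ne', div_mul_eq_mul_div,
    mul_assoc, ← two_div_sqrt_rpow_neg (by linarith)]
  gcongr
  exact one_sub_div_rpow_mul_le_rpow_neg_sub_rpow_neg ha (two_div_sqrt_le_sqrt_two hx)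
    (by positivity) hν.le

lemma mul_integral_rpow_le_setIntegral_angularWeight_mul {ν κ : ℝ} (hκ : 0 ≤ κ) {β : ℝ → ℝ}
    {n : ℕ} (hn : 2 ≤ n) (hβ : ∀ θ ∈ Ioc (2 / √n) (π / 2), κ * θ ^ (-ν - 1) ≤ β θ)
    (hint : IntegrableOn (fun θ ↦ angularWeight n θ * β θ) (Ioc (2 / √n) (π / 2))) :
    (3 / 4 - (1 + 4 / π ^ 2)⁻¹) * κ * ∫ θ in Ioc (2 / √n) (π / 2), θ ^ (-ν - 1)
      ≤ ∫ θ in Ioc (2 / √n) (π / 2), angularWeight n θ * β θ := by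
  have hn' : (0 : ℝ) < n := by norm_cast; omega
  have ha : 0 < 2 / √n := by positivity
  have hab : 2 / √n ≤ π / 2 := two_div_sqrt_le_pi_div_two (by exact_mod_cast hn)
  rw [← integral_const_mul]
  refine setIntegral_mono_on ?_ hint measurableSet_Ioc fun θ hθ ↦ ?_
  · exact ((intervalIntegral.intervalIntegrable_rpow
      (Or.inr (by simp [uIcc_of_le hab, ha.not_ge]))).const_mul _).1
  have hθ0 : 0 < θ := ha.trans hθ.1
  have hnθ : 4 ≤ n * θ ^ 2 := by
    have h2 : 2 < θ * √n := (div_lt_iff₀ (by positivity)).mp hθ.1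
    nlinarith [sq_sqrt hn'.le]
  calc (3 / 4 - (1 + 4 / π ^ 2)⁻¹) * κ * θ ^ (-ν - 1)
      = (3 / 4 - (1 + 4 / π ^ 2)⁻¹) * (κ * θ ^ (-ν - 1)) := mul_assoc _ _ _
    _ ≤ angularWeight n θ * β θ :=
      mul_le_mul (three_quarters_sub_inv_le_angularWeight hn hnθ (abs_le.mpr ⟨by linarith, hθ.2⟩))
        (hβ θ hθ)
        (by positivity) (angularWeight_nonneg (by omega) θ)

theorem angular_integral_lower_bound_general
    (ν κ₁ κ₂ : ℝ) (hν0 : 0 < ν) (hν2 : ν < 2) (hκ₁ : 0 < κ₁) :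
    ∃ ζ₁ > (0:ℝ), ∀ β : ℝ → ℝ, H2cond ν κ₁ κ₂ β →
      ∀ n : ℕ, 2 ≤ n →
        ζ₁ * (n : ℝ) ^ (ν / 2)
        ≤ ∫ θ in Ioc (0:ℝ) π,
            (1 - ((1 + Real.cos θ) / 2) ^ n - ((1 - Real.cos θ) / 2) ^ n) * β θ := by
  set δ : ℝ := 3 / 4 - (1 + 4 / π ^ 2)⁻¹
  have hδ : 0 < δ := three_quarters_sub_inv_one_add_four_div_pi_sq_pos
  have hρ : (√2 / (π / 2)) ^ ν < 1 :=
    rpow_lt_one (by positivity) ((div_lt_one (by positivity)).mpr sqrt_two_lt_pi_div_two) hν0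
  refine ⟨δ * κ₁ * ((1 - (√2 / (π / 2)) ^ ν) * 2 ^ (-ν) / ν), by
    have := sub_pos.mpr hρ; positivity, ?_⟩
  rintro β ⟨hβm, hβ⟩ n hn
  have hβ0 : ∀ θ ∈ Ioc 0 π, 0 ≤ β θ := fun θ hθ ↦
    (mul_nonneg hκ₁.le (rpow_nonneg hθ.1.le _)).trans (hβ θ hθ).1
  have hint := integrableOn_angularWeight_mul hν2 hβm (fun θ hθ ↦ ⟨hβ0 θ hθ, (hβ θ hθ).2⟩)
    (n := n) (by omega)
  have hwindow : Ioc (2 / √n) (π / 2) ⊆ Ioc 0 π :=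
    Ioc_subset_Ioc (by positivity) (by linarith [pi_pos])
  calc δ * κ₁ * ((1 - (√2 / (π / 2)) ^ ν) * 2 ^ (-ν) / ν) * n ^ (ν / 2)
      ≤ δ * κ₁ * ∫ θ in Ioc (2 / √n) (π / 2), θ ^ (-ν - 1) := by
        rw [mul_assoc]
        gcongr
        exact mul_rpow_le_integral_Ioc_two_div_sqrt_rpow hν0 (by exact_mod_cast hn)
    _ ≤ ∫ θ in Ioc (2 / √n) (π / 2), angularWeight n θ * β θ :=
        mul_integral_rpow_le_setIntegral_angularWeight_mul hκ₁.le hn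
          (fun θ hθ ↦ (hβ θ (hwindow hθ)).1) (hint.mono_set hwindow)
    _ ≤ ∫ θ in Ioc 0 π, angularWeight n θ * β θ :=
        setIntegral_mono_set hint (ae_restrict_of_forall_mem measurableSet_Ioc fun θ hθ ↦
          mul_nonneg (angularWeight_nonneg (by omega) θ) (hβ0 θ hθ)) hwindow.eventuallyLE

/-- Under `H₂(ν)` there is `ζ₁ ∈ (0,∞)` depending only on `ν, κ₁, κ₂` (one may take
`ζ₁ = κ₁/(20(2-ν))`) such that for every integer `n ≥ 2`,
`aₙ = ∫₀^π (1 - ((1+cosθ)/2)^n - ((1-cosθ)/2)^n) β(θ) dθ ≥ ζ₁ n^{ν/2}`. -/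
theorem angular_integral_lower_bound
    (ν κ₁ κ₂ : ℝ) (hν0 : 0 < ν) (hν2 : ν < 2) (hκ₁ : 0 < κ₁) (hκ₂ : 0 < κ₂) :
    ∃ ζ₁ > (0:ℝ), ∀ β : ℝ → ℝ, H2cond ν κ₁ κ₂ β →
      ∀ n : ℕ, 2 ≤ n →
        ζ₁ * (n : ℝ) ^ (ν / 2)
        ≤ ∫ θ in Ioc (0:ℝ) π,
            (1 - ((1 + Real.cos θ) / 2) ^ n - ((1 - Real.cos θ) / 2) ^ n) * β θ :=
  angular_integral_lower_bound_general ν κ₁ κ₂ hν0 hν2 hκ₁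
end
end

section
/- For every ν ∈ [0,2) there is a constant A_ν ∈ (0,∞), depending only on ν, such that for all integers a, n with 1 ≤ a ≤ n−1, setting K_{ν,n,a} := ∫₀^{π/2} ((1+cos θ)/2)^a ((1−cos θ)/2)^{n−a} θ^{−ν−1} dθ, one has C(n,a) · K_{ν,n,a} ≤ A_ν n^{ν/2}/(n−a)^{1+ν/2}, where C(n,a) denotes the binomial coefficient. -/
open MeasureTheory Real Set

noncomputable section

/-! The substitution `u = (1 - cos θ) / 2` turns `K_{ν,n,a}` into a Beta-type integral: on
`(0, π/2)` one has `θ ^ (-ν-1) ≤ sin (θ/2) ^ (-ν-1) ≤ 2 cos (θ/2) sin (θ/2) ^ (-ν-1)`, and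
`du = sin (θ/2) cos (θ/2) dθ`, so `K_{ν,n,a} ≤ 2 B(n - a - ν/2, a + 1)`. Multiplying by `C(n,a)`
gives `2 (n! / Γ(n + 1 - ν/2)) (Γ(n - a - ν/2) / (n - a)!)`, and both Gamma ratios are controlled
by Gautschi's inequality `Γ(x + t) ≤ Γ(x) x ^ t` for `0 ≤ t ≤ 1`, which is the log-convexity of `Γ`
between `x` and `x + 1`. -/

theorem integral_rpow_mul_one_sub_rpow_eq_beta {p q : ℝ} (hp : 0 < p) (hq : 0 < q) :
    ∫ u in Ioo (0:ℝ) 1, u ^ (p - 1) * (1 - u) ^ (q - 1) = ProbabilityTheory.beta p q := by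
  have hcomplex : Complex.betaIntegral p q
      = ((∫ u in (0:ℝ)..1, u ^ (p - 1) * (1 - u) ^ (q - 1) : ℝ) : ℂ) := by
    rw [Complex.betaIntegral, ← intervalIntegral.integral_ofReal]
    refine intervalIntegral.integral_congr fun u hu => ?_
    rw [uIcc_of_le zero_le_one] at hu
    push_cast
    rw [Complex.ofReal_cpow hu.1, Complex.ofReal_cpow (by linarith [hu.2])]
    push_cast
    ring
  rw [ProbabilityTheory.beta_eq_betaIntegralReal p q hp hq, hcomplex, Complex.ofReal_re,
    intervalIntegral.integral_of_le zero_le_one, integral_Ioc_eq_integral_Ioo]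

theorem integrableOn_rpow_mul_one_sub_rpow {p q : ℝ} (hp : 0 < p) (hq : 0 < q) :
    IntegrableOn (fun u : ℝ => u ^ (p - 1) * (1 - u) ^ (q - 1)) (Ioo 0 1) := by
  -- otherwise the integral would be the junk value `0`, but it is the positive `beta p q`
  by_contra h
  have hzero := integral_undef h
  rw [integral_rpow_mul_one_sub_rpow_eq_beta hp hq] at hzero
  exact (ProbabilityTheory.beta_pos hp hq).ne' hzero

theorem setIntegral_sin_mul_comp_le {s : Set ℝ} (hs : MeasurableSet s) (hsπ : s ⊆ Ioo 0 π)
    {g : ℝ → ℝ} (hg₀ : ∀ u ∈ Ioo (0:ℝ) 1, 0 ≤ g u) (hg : IntegrableOn g (Ioo 0 1)) :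
    IntegrableOn (fun θ => sin θ / 2 * g ((1 - cos θ) / 2)) s ∧
      ∫ θ in s, sin θ / 2 * g ((1 - cos θ) / 2) ≤ ∫ u in Ioo 0 1, g u := by
  set f : ℝ → ℝ := fun θ => (1 - cos θ) / 2
  have hderiv : ∀ θ ∈ s, HasDerivWithinAt f (sin θ / 2) s θ := fun θ _ => by
    simpa using (((hasDerivAt_cos θ).const_sub 1).div_const 2).hasDerivWithinAt
  have hinj : InjOn f s := fun θ hθ θ' hθ' h =>
    injOn_cos (Ioo_subset_Icc_self (hsπ hθ)) (Ioo_subset_Icc_self (hsπ hθ'))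
      (by simpa [f] using h)
  have himage : f '' s ⊆ Ioo 0 1 := by
    rintro _ ⟨θ, hθ, rfl⟩
    obtain ⟨hθ₀, hθπ⟩ := hsπ hθ
    have h₁ : cos θ < 1 := by simpa using cos_lt_cos_of_nonneg_of_le_pi le_rfl hθπ.le hθ₀
    have h₂ : -1 < cos θ := by simpa using cos_lt_cos_of_nonneg_of_le_pi hθ₀.le le_rfl hθπ
    constructor <;> simp only [f] <;> linarith
  have habs : EqOn (fun θ => |sin θ / 2| • g (f θ)) (fun θ => sin θ / 2 * g (f θ)) s :=
    fun θ hθ => by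
      obtain ⟨hθ₀, hθπ⟩ := hsπ hθ
      simp only [smul_eq_mul]
      rw [abs_of_pos (div_pos (sin_pos_of_pos_of_lt_pi hθ₀ hθπ) two_pos)]
  refine ⟨((integrableOn_image_iff_integrableOn_abs_deriv_smul hs hderiv hinj g).1
    (hg.mono_set himage)).congr_fun habs hs, ?_⟩
  rw [← setIntegral_congr_fun hs habs, ← integral_image_eq_integral_abs_deriv_smul hs hderiv hinj]
  exact setIntegral_mono_set hg (ae_restrict_of_forall_mem measurableSet_Ioo hg₀)
    himage.eventuallyLE

theorem rpow_neg_sub_one_le_sin_mul_rpow {ν θ : ℝ} (hν : -1 ≤ ν) (hθ₀ : 0 < θ)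
    (hθ : θ ≤ 2 * π / 3) :
    θ ^ (-ν - 1) ≤ 2 * (sin θ / 2) * ((1 - cos θ) / 2) ^ (-ν / 2 - 1) := by
  have hs : 0 < sin (θ / 2) := sin_pos_of_pos_of_lt_pi (by linarith) (by linarith [pi_pos])
  have hc : 1 / 2 ≤ cos (θ / 2) := by
    rw [← cos_pi_div_three]
    exact cos_le_cos_of_nonneg_of_le_pi (by linarith) (by linarith [pi_pos]) (by linarith)
  have hsin : sin θ = 2 * sin (θ / 2) * cos (θ / 2) := by
    rw [← sin_two_mul]; ring_nf
  have hcos : (1 - cos θ) / 2 = sin (θ / 2) ^ 2 := by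
    rw [sin_sq_eq_half_sub]; ring_nf
  have hpow : sin (θ / 2) * (sin (θ / 2) ^ 2) ^ (-ν / 2 - 1) = sin (θ / 2) ^ (-ν - 1) := by
    rw [← rpow_natCast, ← rpow_mul hs.le, show -ν - 1 = 1 + (2 : ℕ) * (-ν / 2 - 1) by
      push_cast; ring, rpow_add hs, rpow_one]
  calc θ ^ (-ν - 1) ≤ sin (θ / 2) ^ (-ν - 1) :=
        rpow_le_rpow_of_nonpos hs (by linarith [sin_le (by linarith : 0 ≤ θ / 2)]) (by linarith)
    _ ≤ 2 * cos (θ / 2) * sin (θ / 2) ^ (-ν - 1) :=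
        le_mul_of_one_le_left (rpow_nonneg hs.le _) (by linarith)
    _ = 2 * (sin θ / 2) * ((1 - cos θ) / 2) ^ (-ν / 2 - 1) := by
        rw [hsin, hcos, ← hpow]; ring

theorem setIntegral_pow_mul_pow_mul_rpow_le_beta (a m : ℕ) {ν : ℝ} (hν : -1 ≤ ν)
    (hνm : ν < 2 * m) :
    ∫ θ in Ioo 0 (π / 2), ((1 + cos θ) / 2) ^ a * ((1 - cos θ) / 2) ^ m * θ ^ (-ν - 1)
      ≤ 2 * ProbabilityTheory.beta (m - ν / 2) (a + 1) := by
  have hp : 0 < (m : ℝ) - ν / 2 := by linarith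
  set g : ℝ → ℝ := fun u => u ^ ((m - ν / 2) - 1) * (1 - u) ^ (((a : ℝ) + 1) - 1)
  have hg₀ : ∀ u ∈ Ioo (0:ℝ) 1, 0 ≤ g u := fun u hu =>
    mul_nonneg (rpow_nonneg hu.1.le _) (rpow_nonneg (by linarith [hu.2]) _)
  obtain ⟨hint, hle⟩ := setIntegral_sin_mul_comp_le (s := Ioo 0 (π / 2)) measurableSet_Ioo
    (Ioo_subset_Ioo_right (by linarith [pi_pos])) hg₀
    (integrableOn_rpow_mul_one_sub_rpow hp (by positivity))
  have hweight : ∀ θ, 0 ≤ ((1 + cos θ) / 2) ^ a * ((1 - cos θ) / 2) ^ m := fun θ =>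
    mul_nonneg (pow_nonneg (by linarith [neg_one_le_cos θ]) _)
      (pow_nonneg (by linarith [cos_le_one θ]) _)
  have hpointwise : ∀ θ ∈ Ioo 0 (π / 2),
      ((1 + cos θ) / 2) ^ a * ((1 - cos θ) / 2) ^ m * θ ^ (-ν - 1)
        ≤ 2 * (sin θ / 2 * g ((1 - cos θ) / 2)) := fun θ hθ => by
    have hu : 0 < (1 - cos θ) / 2 := by
      linarith [cos_lt_cos_of_nonneg_of_le_pi le_rfl (by linarith [hθ.2, pi_pos]) hθ.1, cos_zero]
    have hsplit : ((1 - cos θ) / 2) ^ ((m - ν / 2) - 1)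
        = ((1 - cos θ) / 2) ^ m * ((1 - cos θ) / 2) ^ (-ν / 2 - 1) := by
      rw [← rpow_natCast, ← rpow_add hu]; ring_nf
    simp only [g, hsplit, show (1 : ℝ) - (1 - cos θ) / 2 = (1 + cos θ) / 2 by ring,
      add_sub_cancel_right, rpow_natCast]
    calc ((1 + cos θ) / 2) ^ a * ((1 - cos θ) / 2) ^ m * θ ^ (-ν - 1)
        ≤ ((1 + cos θ) / 2) ^ a * ((1 - cos θ) / 2) ^ m
            * (2 * (sin θ / 2) * ((1 - cos θ) / 2) ^ (-ν / 2 - 1)) := by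
          gcongr
          · exact hweight θ
          · exact rpow_neg_sub_one_le_sin_mul_rpow hν hθ.1 (by linarith [hθ.2, pi_pos])
      _ = _ := by ring
  calc ∫ θ in Ioo 0 (π / 2), ((1 + cos θ) / 2) ^ a * ((1 - cos θ) / 2) ^ m * θ ^ (-ν - 1)
      ≤ ∫ θ in Ioo 0 (π / 2), 2 * (sin θ / 2 * g ((1 - cos θ) / 2)) :=
        integral_mono_of_nonneg (ae_restrict_of_forall_mem measurableSet_Ioo fun θ hθ =>
            mul_nonneg (hweight θ) (rpow_nonneg hθ.1.le _))
          (hint.const_mul 2) (ae_restrict_of_forall_mem measurableSet_Ioo hpointwise)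
    _ = 2 * ∫ θ in Ioo 0 (π / 2), sin θ / 2 * g ((1 - cos θ) / 2) := integral_const_mul _ _
    _ ≤ 2 * ProbabilityTheory.beta (m - ν / 2) (a + 1) := by
        rw [← integral_rpow_mul_one_sub_rpow_eq_beta hp (by positivity)]
        gcongr

namespace Real

theorem Gamma_add_le_Gamma_mul_rpow {x t : ℝ} (hx : 0 < x) (ht₀ : 0 ≤ t) (ht₁ : t ≤ 1) :
    Gamma (x + t) ≤ Gamma x * x ^ t := by
  have hconv := convexOn_log_Gamma.2 (mem_Ioi.2 hx) (mem_Ioi.2 (by linarith : 0 < x + 1))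
    (by linarith : 0 ≤ 1 - t) ht₀ (by ring)
  simp only [smul_eq_mul, Function.comp_apply, Gamma_add_one hx.ne',
    log_mul hx.ne' (Gamma_pos_of_pos hx).ne', show (1 - t) * x + t * (x + 1) = x + t by ring]
    at hconv
  rw [← log_le_log_iff (Gamma_pos_of_pos (by linarith)) (by positivity),
    log_mul (Gamma_pos_of_pos hx).ne' (by positivity), log_rpow hx]
  linarith

theorem Gamma_add_one_le_two_mul_rpow {x α : ℝ} (hx : 1 ≤ x) (hα₀ : 0 ≤ α) (hα₁ : α ≤ 1) :
    Gamma (x + 1) ≤ 2 * x ^ α * Gamma (x + 1 - α) := by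
  have hgautschi := Gamma_add_le_Gamma_mul_rpow (x := x + 1 - α) (by linarith) hα₀ hα₁
  rw [sub_add_cancel] at hgautschi
  have hpow : (x + 1 - α) ^ α ≤ 2 * x ^ α := calc
    (x + 1 - α) ^ α ≤ (2 * x) ^ α := by gcongr <;> linarith
    _ = 2 ^ α * x ^ α := mul_rpow zero_le_two (by linarith)
    _ ≤ 2 * x ^ α := by
        gcongr
        simpa using rpow_le_rpow_of_exponent_le one_le_two hα₁
  calc Gamma (x + 1) ≤ Gamma (x + 1 - α) * (x + 1 - α) ^ α := hgautschi
    _ ≤ Gamma (x + 1 - α) * (2 * x ^ α) := by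
        gcongr
        exact (Gamma_pos_of_pos (by linarith)).le
    _ = 2 * x ^ α * Gamma (x + 1 - α) := mul_comm _ _

theorem Gamma_sub_le_Gamma_add_one_div {x α : ℝ} (hx : 1 ≤ x) (hα₀ : 0 ≤ α) (hα₁ : α < 1) :
    Gamma (x - α) ≤ Gamma (x + 1) / ((1 - α) * x ^ (1 + α)) := by
  have hx₀ : 0 < x := by linarith
  have hshift : (x - α) * Gamma (x - α) ≤ Gamma x * x ^ (1 - α) := by
    rw [← Gamma_add_one (by linarith), show x - α + 1 = x + (1 - α) by ring]
    exact Gamma_add_le_Gamma_mul_rpow hx₀ (by linarith) (by linarith)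
  rw [le_div_iff₀ (by positivity), Gamma_add_one hx₀.ne']
  calc Gamma (x - α) * ((1 - α) * x ^ (1 + α))
      = ((1 - α) * x) * (Gamma (x - α) * x ^ α) := by rw [rpow_add hx₀, rpow_one]; ring
    _ ≤ (x - α) * (Gamma (x - α) * x ^ α) := by
        gcongr
        · exact mul_nonneg (Gamma_pos_of_pos (by linarith)).le (rpow_nonneg hx₀.le α)
        · nlinarith
    _ ≤ Gamma x * x ^ (1 - α) * x ^ α := by rw [← mul_assoc]; gcongr
    _ = x * Gamma x := by
        rw [mul_assoc, ← rpow_add hx₀, sub_add_cancel, rpow_one, mul_comm]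

end Real

theorem Nat.choose_mul_beta_le {n a : ℕ} (han : a < n) {α : ℝ} (hα₀ : 0 ≤ α) (hα₁ : α < 1) :
    (n.choose a : ℝ) * ProbabilityTheory.beta ((n - a : ℕ) - α) (a + 1)
      ≤ 2 * (n : ℝ) ^ α / ((1 - α) * ((n - a : ℕ) : ℝ) ^ (1 + α)) := by
  obtain ⟨m, rfl⟩ : ∃ m, n = a + m := ⟨n - a, by omega⟩
  rw [Nat.add_sub_cancel_left]
  have hm : (1 : ℝ) ≤ m := by exact_mod_cast (by omega : 1 ≤ m)
  have hfactorial :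
      ((a + m).choose a : ℝ) * Gamma (a + 1) * Gamma (m + 1) = Gamma ((a + m : ℕ) + 1) := by
    have h := Nat.choose_mul_factorial_mul_factorial (Nat.le_add_right a m)
    rw [Nat.add_sub_cancel_left] at h
    simp only [Gamma_nat_eq_factorial]
    exact_mod_cast h
  have hΓn := Gamma_add_one_le_two_mul_rpow (x := (a + m : ℕ)) (by push_cast; linarith)
    hα₀ hα₁.le
  have hΓpos : 0 < Gamma ((a + m : ℕ) + 1 - α) := Gamma_pos_of_pos (by push_cast; linarith)
  rw [ProbabilityTheory.beta, show (m : ℝ) - α + (a + 1) = (a + m : ℕ) + 1 - α by push_cast; ring]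
  calc ((a + m).choose a : ℝ) * (Gamma (m - α) * Gamma (a + 1) / Gamma ((a + m : ℕ) + 1 - α))
      = ((a + m).choose a : ℝ) * Gamma (a + 1) * Gamma (m - α) / Gamma ((a + m : ℕ) + 1 - α) := by
        ring
    _ ≤ ((a + m).choose a : ℝ) * Gamma (a + 1) * (Gamma (m + 1) / ((1 - α) * m ^ (1 + α)))
          / Gamma ((a + m : ℕ) + 1 - α) := by
        gcongr
        exact Gamma_sub_le_Gamma_add_one_div hm hα₀ hα₁
    _ = Gamma ((a + m : ℕ) + 1) / Gamma ((a + m : ℕ) + 1 - α) / ((1 - α) * m ^ (1 + α)) := by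
        rw [← hfactorial]; ring
    _ ≤ 2 * ((a + m : ℕ) : ℝ) ^ α / ((1 - α) * m ^ (1 + α)) := by
        gcongr
        rwa [div_le_iff₀ hΓpos]

/-- For every `ν ∈ [0,2)` there is `A_ν ∈ (0,∞)` such that for all integers `1 ≤ a ≤ n-1`,
with `K_{ν,n,a} = ∫₀^{π/2} ((1+cosθ)/2)^a ((1-cosθ)/2)^{n-a} θ^{-ν-1} dθ`,
one has `C(n,a) K_{ν,n,a} ≤ A_ν n^{ν/2}/(n-a)^{1+ν/2}`. -/
theorem singular_beta_integral_bound
    (ν : ℝ) (hν0 : 0 ≤ ν) (hν2 : ν < 2) :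
    ∃ Aν > (0:ℝ), ∀ n a : ℕ, 1 ≤ a → a ≤ n - 1 →
      (n.choose a : ℝ)
        * ∫ θ in Ioo (0:ℝ) (π / 2),
            ((1 + Real.cos θ) / 2) ^ a * ((1 - Real.cos θ) / 2) ^ (n - a) * θ ^ (-ν - 1)
      ≤ Aν * (n : ℝ) ^ (ν / 2) / ((n - a : ℕ) : ℝ) ^ (1 + ν / 2) := by
  refine ⟨4 / (1 - ν / 2), div_pos four_pos (by linarith), fun n a ha han => ?_⟩
  have hm : (1 : ℝ) ≤ (n - a : ℕ) := by exact_mod_cast (by omega : 1 ≤ n - a)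
  calc (n.choose a : ℝ) * ∫ θ in Ioo (0:ℝ) (π / 2),
          ((1 + cos θ) / 2) ^ a * ((1 - cos θ) / 2) ^ (n - a) * θ ^ (-ν - 1)
      ≤ (n.choose a : ℝ) * (2 * ProbabilityTheory.beta ((n - a : ℕ) - ν / 2) (a + 1)) := by
        gcongr
        exact setIntegral_pow_mul_pow_mul_rpow_le_beta a (n - a) (by linarith) (by linarith)
    _ = 2 * ((n.choose a : ℝ) * ProbabilityTheory.beta ((n - a : ℕ) - ν / 2) (a + 1)) := by ring
    _ ≤ 2 * (2 * (n : ℝ) ^ (ν / 2) / ((1 - ν / 2) * ((n - a : ℕ) : ℝ) ^ (1 + ν / 2))) := by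
        gcongr
        exact Nat.choose_mul_beta_le (by omega) (by linarith) (by linarith)
    _ = 4 / (1 - ν / 2) * (n : ℝ) ^ (ν / 2) / ((n - a : ℕ) : ℝ) ^ (1 + ν / 2) := by
        rw [← div_div]; ring
end
end

section
/- Let f be a probability measure on ℝ³, and let σ₀ ∈ (0,∞), α ∈ [1,∞) and K ∈ [1,∞). If sup_{n ≥ 0} σ₀^n m_{2n}(f)/(n!)^α ≤ K, then ∫_{ℝ³} exp(σ₀^{1/α} |v|^{2/α}/2) f(dv) ≤ 2 K^{1/α}. -/
open MeasureTheory Real Set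

noncomputable section

open scoped ENNReal Nat

/-! Expand `exp (c |v|^{2/α} / 2) = ∑ (c/2)^n |v|^{2n/α} / n!` with `c = σ₀^{1/α}`.
By Lyapunov's inequality on a probability space, `m_{2n/α} ≤ m_{2n}^{1/α}`, which the
hypothesis bounds by `K^{1/α} n! / c^n`. So the `n`-th term integrates to at most
`K^{1/α} 2^{-n}`, and the geometric series sums to `2 K^{1/α}`. -/

theorem ENNReal.ofReal_exp_eq_tsum {x : ℝ} (hx : 0 ≤ x) :
    ENNReal.ofReal (exp x) = ∑' n : ℕ, ENNReal.ofReal (x ^ n / n !) := by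
  rw [← ENNReal.ofReal_tsum_of_nonneg (fun n => by positivity)
    (Real.summable_pow_div_factorial x), Real.exp_eq_exp_ℝ,
    (NormedSpace.expSeries_div_hasSum_exp x).tsum_eq]

section

variable {Ω : Type*} [MeasurableSpace Ω] {μ : Measure Ω}

theorem lintegral_ofReal_exp_eq_tsum {g : Ω → ℝ} (hg : AEMeasurable g μ) (hg0 : 0 ≤ g) :
    ∫⁻ x, ENNReal.ofReal (exp (g x)) ∂μ
      = ∑' n : ℕ, ∫⁻ x, ENNReal.ofReal (g x ^ n / n !) ∂μ := by
  simp_rw [ENNReal.ofReal_exp_eq_tsum (hg0 _)]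
  exact lintegral_tsum fun n => ((hg.pow_const n).div_const _).ennreal_ofReal

theorem lintegral_rpow_div_le_lintegral_rpow_rpow [IsProbabilityMeasure μ] {g : Ω → ℝ≥0∞}
    (hg : AEMeasurable g μ) {α q : ℝ} (hα : 1 ≤ α) (hq : 0 ≤ q) :
    ∫⁻ x, g x ^ (q / α) ∂μ ≤ (∫⁻ x, g x ^ q ∂μ) ^ (1 / α) := by
  rcases hq.eq_or_lt with rfl | hq
  · simp
  have hp : 0 < q / α := by positivity
  have hpq : q / α ≤ q := div_le_self hq.le hα
  have key := ENNReal.rpow_le_rpow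
    (eLpNorm'_le_eLpNorm'_of_exponent_le hp hpq μ hg.aestronglyMeasurable) hp.le
  simp only [eLpNorm', enorm_eq_self, ← ENNReal.rpow_mul] at key
  rwa [one_div_mul_cancel hp.ne', ENNReal.rpow_one,
    show 1 / q * (q / α) = 1 / α by field_simp] at key

end

theorem lintegral_ofReal_mul_norm_rpow_pow_div_factorial (f : Measure V3) {c s : ℝ} (hc : 0 ≤ c)
    (hs : 0 ≤ s) (n : ℕ) :
    ∫⁻ v, ENNReal.ofReal ((c * ‖v‖ ^ s) ^ n / n !) ∂f
      = ENNReal.ofReal (c ^ n / n !) * momL (s * n) f := by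
  rw [momL, ← lintegral_const_mul _ (by fun_prop)]
  refine lintegral_congr fun v => ?_
  rw [mul_pow, mul_div_right_comm, ENNReal.ofReal_mul (by positivity),
    ← Real.rpow_natCast (‖v‖ ^ s), ← Real.rpow_mul (norm_nonneg v),
    ← ENNReal.ofReal_rpow_of_nonneg (norm_nonneg v) (by positivity), ofReal_norm,
    enorm_eq_nnnorm]

theorem ofReal_rpow_pow_mul_momL_le (f : Measure V3) [IsProbabilityMeasure f] {σ α K : ℝ}
    (hσ : 0 ≤ σ) (hα : 1 ≤ α) (hK : 0 ≤ K) (n : ℕ)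
    (h : ENNReal.ofReal (σ ^ n) * momL (2 * n) f ≤ ENNReal.ofReal (K * (n ! : ℝ) ^ α)) :
    ENNReal.ofReal ((σ ^ (1 / α)) ^ n) * momL (2 * n / α) f
      ≤ ENNReal.ofReal (K ^ (1 / α) * n !) := by
  calc ENNReal.ofReal ((σ ^ (1 / α)) ^ n) * momL (2 * n / α) f
      ≤ ENNReal.ofReal (σ ^ n) ^ (1 / α) * momL (2 * n) f ^ (1 / α) := by
        rw [ENNReal.ofReal_rpow_of_nonneg (by positivity) (by positivity),
          ← Real.rpow_pow_comm hσ]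
        gcongr
        exact lintegral_rpow_div_le_lintegral_rpow_rpow (by fun_prop) hα (by positivity)
    _ = (ENNReal.ofReal (σ ^ n) * momL (2 * n) f) ^ (1 / α) :=
        (ENNReal.mul_rpow_of_nonneg _ _ (by positivity)).symm
    _ ≤ ENNReal.ofReal (K * (n ! : ℝ) ^ α) ^ (1 / α) := by gcongr
    _ = ENNReal.ofReal (K ^ (1 / α) * n !) := by
        rw [ENNReal.ofReal_rpow_of_nonneg (by positivity) (by positivity),
          Real.mul_rpow hK (by positivity), one_div,
          Real.rpow_rpow_inv (by positivity) (by positivity)]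

theorem ofReal_pow_div_factorial_mul_momL_le (f : Measure V3) [IsProbabilityMeasure f]
    {σ α K : ℝ} (hσ : 0 ≤ σ) (hα : 1 ≤ α) (hK : 0 ≤ K) (n : ℕ)
    (h : ENNReal.ofReal (σ ^ n) * momL (2 * n) f ≤ ENNReal.ofReal (K * (n ! : ℝ) ^ α)) :
    ENNReal.ofReal ((σ ^ (1 / α) / 2) ^ n / n !) * momL (2 / α * n) f
      ≤ 2⁻¹ ^ n * ENNReal.ofReal (K ^ (1 / α)) := by
  have hfac : (n ! : ℝ) ≠ 0 := by positivity
  calc ENNReal.ofReal ((σ ^ (1 / α) / 2) ^ n / n !) * momL (2 / α * n) f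
      = ENNReal.ofReal (2⁻¹ ^ n / n !)
          * (ENNReal.ofReal ((σ ^ (1 / α)) ^ n) * momL (2 * n / α) f) := by
        rw [← mul_assoc, ← ENNReal.ofReal_mul (by positivity)]
        congr 2 <;> ring
    _ ≤ ENNReal.ofReal (2⁻¹ ^ n / n !) * ENNReal.ofReal (K ^ (1 / α) * n !) := by
        gcongr
        exact ofReal_rpow_pow_mul_momL_le f hσ hα hK n h
    _ = 2⁻¹ ^ n * ENNReal.ofReal (K ^ (1 / α)) := by
        rw [← ENNReal.ofReal_mul (by positivity), div_mul_eq_mul_div, mul_div_assoc,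
          mul_div_cancel_right₀ _ hfac, ENNReal.ofReal_mul (by positivity),
          ENNReal.ofReal_pow (by norm_num), ENNReal.ofReal_inv_of_pos two_pos, ENNReal.ofReal_ofNat]

/-- Control of exponential moments by even integer moments: if
`sup_n σ₀^n m_{2n}(f)/(n!)^α ≤ K` with `σ₀ > 0`, `α ≥ 1`, `K ≥ 1`, then
`∫ exp(σ₀^{1/α} |v|^{2/α}/2) f(dv) ≤ 2 K^{1/α}`. -/
theorem exp_moment_from_even_moments
    (f : Measure V3) (hf : IsProbabilityMeasure f)
    (σ₀ α K : ℝ) (hσ₀ : 0 < σ₀) (hα : 1 ≤ α) (hK : 1 ≤ K)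
    (h : ∀ n : ℕ, ENNReal.ofReal (σ₀ ^ n) * momL (2 * (n : ℝ)) f
        ≤ ENNReal.ofReal (K * (n.factorial : ℝ) ^ α)) :
    ∫⁻ v, ENNReal.ofReal (Real.exp (σ₀ ^ (1 / α) * ‖v‖ ^ (2 / α) / 2)) ∂f
      ≤ ENNReal.ofReal (2 * K ^ (1 / α)) := by
  calc ∫⁻ v, ENNReal.ofReal (exp (σ₀ ^ (1 / α) * ‖v‖ ^ (2 / α) / 2)) ∂f
      = ∑' n : ℕ, ENNReal.ofReal ((σ₀ ^ (1 / α) / 2) ^ n / n !) * momL (2 / α * n) f := by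
        rw [lintegral_ofReal_exp_eq_tsum (by fun_prop) fun v => by positivity]
        simp_rw [mul_div_right_comm (σ₀ ^ (1 / α))]
        exact tsum_congr fun n =>
          lintegral_ofReal_mul_norm_rpow_pow_div_factorial f (by positivity) (by positivity) n
    _ ≤ ∑' n : ℕ, 2⁻¹ ^ n * ENNReal.ofReal (K ^ (1 / α)) := ENNReal.tsum_le_tsum fun n =>
        ofReal_pow_div_factorial_mul_momL_le f hσ₀.le hα (by linarith) n (h n)
    _ = ENNReal.ofReal (2 * K ^ (1 / α)) := by
        rw [ENNReal.tsum_mul_right, ENNReal.tsum_geometric, ENNReal.one_sub_inv_two, inv_inv,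
          ENNReal.ofReal_mul zero_le_two, ENNReal.ofReal_ofNat]
end
end

section
/- Let f be a probability measure on ℝ³ with m₂(f) = 1 and with finite moments of all orders, let γ > 0, ν ≥ 0, α ≥ 1, σ ∈ (0,1], and let p ≥ 2 be an integer. Then ∑_{n=2}^p n^{ν/2} σ^n m_{2n+γ}(f)/(n!)^α ≥ σ^{−γ/2} ( ∑_{n=0}^p σ^n m_{2n}(f)/(n!)^α − e ), where e is Euler's number. -/
open MeasureTheory Real Set

noncomputable section

/-! Split `ℝ³` at the sphere `|v| = σ^{-1/2}`: inside, `|v|^{2n} ≤ σ^{-n}`; outside,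
`|v|^{2n} ≤ σ^{γ/2} |v|^{2n+γ}`. Integrating against the probability measure `f` gives
`σ^n m_{2n}(f) ≤ 1 + σ^{γ/2} σ^n m_{2n+γ}(f)`, while `σ^n m_{2n}(f) ≤ 1` for `n = 0, 1`
because `m₂(f) = 1`. Dividing by `(n!)^α` and summing, the constants add up to
`∑ 1/(n!)^α ≤ ∑ 1/n! ≤ e`, and `n^{ν/2} ≥ 1` only enlarges the remaining sum. -/

open scoped Nat

theorem Real.rpow_le_rpow_add_rpow_neg_mul_rpow_add {a t q γ : ℝ} (ha : 0 ≤ a) (ht : 0 < t)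
    (hq : 0 ≤ q) (hγ : 0 ≤ γ) : a ^ q ≤ t ^ q + t ^ (-γ) * a ^ (q + γ) := by
  rcases le_or_gt a t with hat | hta
  · have : 0 ≤ t ^ (-γ) * a ^ (q + γ) := by positivity
    have := Real.rpow_le_rpow ha hat hq
    linarith
  · have ha0 : 0 < a := ht.trans hta
    calc a ^ q = a ^ (-γ) * a ^ (q + γ) := by rw [← rpow_add ha0]; ring_nf
      _ ≤ t ^ (-γ) * a ^ (q + γ) :=
        mul_le_mul_of_nonneg_right (rpow_le_rpow_of_nonpos ht hta.le (neg_nonpos.mpr hγ))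
          (by positivity)
      _ ≤ t ^ q + t ^ (-γ) * a ^ (q + γ) := le_add_of_nonneg_left (by positivity)

theorem integral_rpow_le_rpow_add_rpow_neg_mul_integral_rpow_add {Ω : Type*}
    [MeasurableSpace Ω] (μ : Measure Ω) [IsProbabilityMeasure μ] {g : Ω → ℝ} (hg : 0 ≤ g)
    {t q γ : ℝ} (ht : 0 < t) (hq : 0 ≤ q) (hγ : 0 ≤ γ)
    (hint : Integrable (fun x => g x ^ (q + γ)) μ) :
    ∫ x, g x ^ q ∂μ ≤ t ^ q + t ^ (-γ) * ∫ x, g x ^ (q + γ) ∂μ := by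
  calc ∫ x, g x ^ q ∂μ ≤ ∫ x, (t ^ q + t ^ (-γ) * g x ^ (q + γ)) ∂μ :=
        integral_mono_of_nonneg (ae_of_all _ fun x => rpow_nonneg (hg x) q)
          ((integrable_const _).add (hint.const_mul _))
          (ae_of_all _ fun x => rpow_le_rpow_add_rpow_neg_mul_rpow_add (hg x) ht hq hγ)
    _ = t ^ q + t ^ (-γ) * ∫ x, g x ^ (q + γ) ∂μ := by
        rw [integral_add (integrable_const _) (hint.const_mul _), integral_const_mul]
        simp

section Moments

variable (f : Measure V3) [IsProbabilityMeasure f]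

theorem pow_mul_mom_two_mul_le {γ σ : ℝ} (hγ : 0 ≤ γ) (hσ : 0 < σ) (n : ℕ)
    (hint : Integrable (fun v : V3 => ‖v‖ ^ (2 * (n : ℝ) + γ)) f) :
    σ ^ n * mom (2 * n) f ≤ 1 + σ ^ (γ / 2) * (σ ^ n * mom (2 * n + γ) f) := by
  have hmom := integral_rpow_le_rpow_add_rpow_neg_mul_integral_rpow_add f
    (fun v => norm_nonneg v) (rpow_pos_of_pos hσ (-1 / 2)) (by positivity) hγ hint
  have hpow : (σ ^ (-1 / 2 : ℝ)) ^ (2 * (n : ℝ)) = σ ^ (-(n : ℝ)) := by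
    rw [← rpow_mul hσ.le]; ring_nf
  have hpow' : (σ ^ (-1 / 2 : ℝ)) ^ (-γ) = σ ^ (γ / 2) := by
    rw [← rpow_mul hσ.le]; ring_nf
  have hcancel : σ ^ n * σ ^ (-(n : ℝ)) = 1 := by
    rw [← rpow_natCast σ n, ← rpow_add hσ]; simp
  rw [hpow, hpow'] at hmom
  calc σ ^ n * mom (2 * n) f ≤ σ ^ n * (σ ^ (-(n : ℝ)) + σ ^ (γ / 2) * mom (2 * n + γ) f) := by
        gcongr; exact hmom
    _ = 1 + σ ^ (γ / 2) * (σ ^ n * mom (2 * n + γ) f) := by rw [mul_add, hcancel]; ring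

theorem pow_mul_mom_two_mul_le_one (hm2 : mom 2 f = 1) {σ : ℝ} (hσ1 : σ ≤ 1) {n : ℕ}
    (hn : n < 2) : σ ^ n * mom (2 * n) f ≤ 1 := by
  interval_cases n
  · simp [mom]
  · simpa [hm2] using hσ1

theorem pow_mul_mom_two_mul_div_le {γ ν α σ : ℝ} (hm2 : mom 2 f = 1) (hγ : 0 ≤ γ)
    (hν : 0 ≤ ν) (hσ0 : 0 < σ) (hσ1 : σ ≤ 1) (n : ℕ)
    (hint : Integrable (fun v : V3 => ‖v‖ ^ (2 * (n : ℝ) + γ)) f) :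
    σ ^ n * mom (2 * n) f / (n ! : ℝ) ^ α ≤ 1 / (n ! : ℝ) ^ α
      + σ ^ (γ / 2) * if 2 ≤ n then
          (n : ℝ) ^ (ν / 2) * σ ^ n * mom (2 * n + γ) f / (n ! : ℝ) ^ α else 0 := by
  have hfact : 0 < (n ! : ℝ) ^ α := by positivity
  split_ifs with hn
  · have hmom : 0 ≤ mom (2 * n + γ) f := integral_nonneg fun v => by positivity
    have hweight : 1 ≤ (n : ℝ) ^ (ν / 2) :=
      one_le_rpow (by exact_mod_cast (by omega : 1 ≤ n)) (by positivity)
    calc σ ^ n * mom (2 * n) f / (n ! : ℝ) ^ α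
        ≤ (1 + σ ^ (γ / 2) * (σ ^ n * mom (2 * n + γ) f)) / (n ! : ℝ) ^ α := by
          gcongr; exact pow_mul_mom_two_mul_le f hγ hσ0 n hint
      _ ≤ (1 + σ ^ (γ / 2) * ((n : ℝ) ^ (ν / 2) * σ ^ n * mom (2 * n + γ) f)) /
            (n ! : ℝ) ^ α := by
          gcongr; exact le_mul_of_one_le_left (by positivity) hweight
      _ = _ := by ring
  · rw [mul_zero, add_zero]
    gcongr
    exact pow_mul_mom_two_mul_le_one f hm2 hσ1 (by omega)

end Moments

theorem sum_range_one_div_factorial_rpow_le_exp_one {α : ℝ} (hα : 1 ≤ α) (N : ℕ) :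
    ∑ n ∈ Finset.range N, 1 / (n ! : ℝ) ^ α ≤ exp 1 := by
  calc ∑ n ∈ Finset.range N, 1 / (n ! : ℝ) ^ α ≤ ∑ n ∈ Finset.range N, 1 / (n ! : ℝ) := by
        gcongr with n
        exact self_le_rpow_of_one_le (Nat.one_le_cast.mpr n.factorial_pos) hα
    _ ≤ exp 1 := by simpa using sum_le_exp_of_nonneg zero_le_one N

theorem series_lower_bound_general
    (f : Measure V3) (hf : IsProbabilityMeasure f) (hm2 : mom 2 f = 1)
    (hfin : ∀ q : ℝ, 0 ≤ q → Integrable (fun v : V3 => ‖v‖ ^ q) f)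
    (γ ν α σ : ℝ) (hγ : 0 < γ) (hν : 0 ≤ ν) (hα : 1 ≤ α) (hσ0 : 0 < σ) (hσ1 : σ ≤ 1)
    (p : ℕ) :
    σ ^ (-γ / 2)
      * ((∑ n ∈ Finset.range (p + 1), σ ^ n * mom (2 * (n : ℝ)) f / (n.factorial : ℝ) ^ α)
          - Real.exp 1)
    ≤ ∑ n ∈ Finset.Icc 2 p,
        (n : ℝ) ^ (ν / 2) * σ ^ n * mom (2 * (n : ℝ) + γ) f / (n.factorial : ℝ) ^ α := by
  set R := ∑ n ∈ Finset.Icc 2 p, (n : ℝ) ^ (ν / 2) * σ ^ n * mom (2 * n + γ) f / (n ! : ℝ) ^ α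
  have hrange : (Finset.range (p + 1)).filter (2 ≤ ·) = Finset.Icc 2 p := by
    ext n; simp only [Finset.mem_filter, Finset.mem_range, Finset.mem_Icc]; omega
  have hsum : ∑ n ∈ Finset.range (p + 1), σ ^ n * mom (2 * n) f / (n ! : ℝ) ^ α
      ≤ exp 1 + σ ^ (γ / 2) * R := by
    calc _ ≤ ∑ n ∈ Finset.range (p + 1), (1 / (n ! : ℝ) ^ α + σ ^ (γ / 2) * if 2 ≤ n then
            (n : ℝ) ^ (ν / 2) * σ ^ n * mom (2 * n + γ) f / (n ! : ℝ) ^ α else 0) :=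
          Finset.sum_le_sum fun n _ => pow_mul_mom_two_mul_div_le f hm2 hγ.le hν hσ0 hσ1 n
            (hfin _ (by positivity))
      _ = ∑ n ∈ Finset.range (p + 1), 1 / (n ! : ℝ) ^ α + σ ^ (γ / 2) * R := by
          rw [Finset.sum_add_distrib, ← Finset.mul_sum, ← Finset.sum_filter, hrange]
      _ ≤ exp 1 + σ ^ (γ / 2) * R := by
          gcongr; exact sum_range_one_div_factorial_rpow_le_exp_one hα _
  calc σ ^ (-γ / 2) * (∑ n ∈ Finset.range (p + 1), σ ^ n * mom (2 * n) f / (n ! : ℝ) ^ α - exp 1)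
      ≤ σ ^ (-γ / 2) * (σ ^ (γ / 2) * R) := by gcongr; linarith
    _ = R := by rw [← mul_assoc, ← rpow_add hσ0, neg_div, neg_add_cancel, rpow_zero, one_mul]

/-- Lower bound of the weighted moment sum: for a probability measure `f` on `ℝ³` with
`m₂(f) = 1` and finite moments of all orders, `γ > 0`, `ν ≥ 0`, `α ≥ 1`, `σ ∈ (0,1]` and
any integer `p ≥ 2`,
`∑_{n=2}^p n^{ν/2} σ^n m_{2n+γ}(f)/(n!)^α ≥ σ^{-γ/2}(∑_{n=0}^p σ^n m_{2n}(f)/(n!)^α - e)`. -/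
theorem series_lower_bound
    (f : Measure V3) (hf : IsProbabilityMeasure f) (hm2 : mom 2 f = 1)
    (hfin : ∀ q : ℝ, 0 ≤ q → Integrable (fun v : V3 => ‖v‖ ^ q) f)
    (γ ν α σ : ℝ) (hγ : 0 < γ) (hν : 0 ≤ ν) (hα : 1 ≤ α) (hσ0 : 0 < σ) (hσ1 : σ ≤ 1)
    (p : ℕ) (hp : 2 ≤ p) :
    σ ^ (-γ / 2)
      * ((∑ n ∈ Finset.range (p + 1), σ ^ n * mom (2 * (n : ℝ)) f / (n.factorial : ℝ) ^ α)
          - Real.exp 1)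
    ≤ ∑ n ∈ Finset.Icc 2 p,
        (n : ℝ) ^ (ν / 2) * σ ^ n * mom (2 * (n : ℝ) + γ) f / (n.factorial : ℝ) ^ α :=
  series_lower_bound_general f hf hm2 hfin γ ν α σ hγ hν hα hσ0 hσ1 p
end
end
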